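/- arXiv:math/0505631 — 7 statements merged into one kernel-verified Lean document; each statement's English description precedes it below -/
import Mathlib

section
/- If {X_1, …, X_{n_1}} and {Y_1, …, Y_{n_2}} are each a set of negatively associated real-valued random variables, and the two sets are independent of each other, then their union {X_1, …, X_{n_1}, Y_1, …, Y_{n_2}} is a set of negatively associated random variables. -/
open MeasureTheory ProbabilityTheory

/-- Covariance of two real-valued functions with respect to a measure. -/
noncomputable def covar {Ω : Type*} [MeasurableSpace Ω] (μ : Measure Ω) (f g : Ω → ℝ) : ℝ :=
  (∫ ω, f ω * g ω ∂μ) - (∫ ω, f ω ∂μ) * ∫ ω, g ω ∂μ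

/-- Negative association of a finite family of real-valued random variables. -/
def NegAssoc {Ω : Type*} [MeasurableSpace Ω] (μ : Measure Ω) {n : ℕ}
    (X : Fin n → Ω → ℝ) : Prop :=
  ∀ A₁ A₂ : Finset (Fin n), Disjoint A₁ A₂ →
    ∀ f₁ : ({ i // i ∈ A₁ } → ℝ) → ℝ, ∀ f₂ : ({ i // i ∈ A₂ } → ℝ) → ℝ,
      Monotone f₁ → Monotone f₂ → Measurable f₁ → Measurable f₂ →
      Integrable (fun ω => f₁ (fun i => X i.1 ω)) μ →
      Integrable (fun ω => f₂ (fun i => X i.1 ω)) μ →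
      Integrable (fun ω => f₁ (fun i => X i.1 ω) * f₂ (fun i => X i.1 ω)) μ →
      covar μ (fun ω => f₁ (fun i => X i.1 ω)) (fun ω => f₂ (fun i => X i.1 ω)) ≤ 0

/-! Clipping the test functions to `[-M, M]` and letting `M → ∞` (dominated convergence)
reduces negative association to bounded test functions, and a bounded test function of some
coordinates may as well be seen as a function of the whole vector depending only on those
coordinates. In this form negative association is a property of the law alone. By independence
the law of the joint vector is the image under `Fin.append` of `P ⊗ Q`, where `P` and `Q` are
the laws of `X` and `Y`, and the law of total covariance gives
`Cov(F₁, F₂) = E_Q[Cov_P(F₁(·, y), F₂(·, y))] + Cov_Q(E_P F₁(·, y), E_P F₂(·, y))`.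
The sections `F_k(·, y)` are monotone and depend on disjoint coordinates of `X`, and the
averages `E_P F_k(·, y)` are monotone and depend on disjoint coordinates of `Y`, so both terms
are nonpositive. -/

open Filter Topology

lemma abs_mul_le_mul_of_abs_le {a b A B : ℝ} (ha : |a| ≤ A) (hb : |b| ≤ B) : |a * b| ≤ A * B :=
  abs_mul a b ▸ mul_le_mul ha hb (abs_nonneg b) ((abs_nonneg a).trans ha)

section Covariance

variable {α β : Type*} [MeasurableSpace α] [MeasurableSpace β]

lemma covar_map {μ : Measure α} {Z : α → β} (hZ : AEMeasurable Z μ) {F G : β → ℝ}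
    (hF : Measurable F) (hG : Measurable G) :
    covar (μ.map Z) F G = covar μ (fun a => F (Z a)) (fun a => G (Z a)) := by
  simp only [covar]
  rw [integral_map hZ (f := fun b => F b * G b) (hF.mul hG).aestronglyMeasurable,
    integral_map hZ hF.aestronglyMeasurable, integral_map hZ hG.aestronglyMeasurable]

lemma covar_prod {P : Measure α} {Q : Measure β} [IsFiniteMeasure P] [IsFiniteMeasure Q]
    {F₁ F₂ : α × β → ℝ} (hF₁ : Measurable F₁) (hF₂ : Measurable F₂) {C₁ C₂ : ℝ}
    (hC₁ : ∀ p, |F₁ p| ≤ C₁) (hC₂ : ∀ p, |F₂ p| ≤ C₂) :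
    covar (P.prod Q) F₁ F₂ =
      (∫ y, covar P (fun x => F₁ (x, y)) (fun x => F₂ (x, y)) ∂Q) +
        covar Q (fun y => ∫ x, F₁ (x, y) ∂P) (fun y => ∫ x, F₂ (x, y) ∂P) := by
  have integrable_of_bound {F : α × β → ℝ} {C : ℝ} (hF : Measurable F) (hC : ∀ p, |F p| ≤ C) :
      Integrable F (P.prod Q) :=
    .of_bound hF.aestronglyMeasurable C (Eventually.of_forall hC)
  have hF₁₂ : Integrable (fun p => F₁ p * F₂ p) (P.prod Q) :=
    integrable_of_bound (hF₁.mul hF₂) fun p => abs_mul_le_mul_of_abs_le (hC₁ p) (hC₂ p)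
  have hg₁ : Integrable (fun y => ∫ x, F₁ (x, y) ∂P) Q :=
    (integrable_of_bound hF₁ hC₁).integral_prod_right
  have hg₁g₂ : Integrable (fun y => (∫ x, F₁ (x, y) ∂P) * ∫ x, F₂ (x, y) ∂P) Q := by
    refine (integrable_of_bound hF₂ hC₂).integral_prod_right.bdd_mul
      hg₁.aestronglyMeasurable (c := C₁ * P.real Set.univ) (Eventually.of_forall fun y => ?_)
    exact norm_integral_le_of_norm_le_const (Eventually.of_forall fun x => hC₁ (x, y))
  simp only [covar]
  rw [integral_prod_symm _ hF₁₂, integral_prod_symm _ (integrable_of_bound hF₁ hC₁),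
    integral_prod_symm _ (integrable_of_bound hF₂ hC₂), integral_sub hF₁₂.integral_prod_right hg₁g₂]
  ring

end Covariance

section Clipping

def clip (M t : ℝ) : ℝ := max (min t M) (-M)

lemma monotone_clip (M : ℝ) : Monotone (clip M) :=
  fun _ _ h => max_le_max (min_le_min h le_rfl) le_rfl

lemma continuous_clip (M : ℝ) : Continuous (clip M) := by
  unfold clip; fun_prop

lemma abs_clip_le {M : ℝ} (hM : 0 ≤ M) (t : ℝ) : |clip M t| ≤ M :=
  abs_le.2 ⟨le_max_right _ _, max_le (min_le_right _ _) (by linarith)⟩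

lemma abs_clip_le_abs {M : ℝ} (hM : 0 ≤ M) (t : ℝ) : |clip M t| ≤ |t| :=
  abs_le.2 ⟨le_max_of_le_left (le_min (neg_abs_le t) (by linarith [abs_nonneg t])),
    max_le ((min_le_left _ _).trans (le_abs_self t)) (by linarith [abs_nonneg t])⟩

lemma tendsto_clip (t : ℝ) : Tendsto (fun M : ℕ => clip M t) atTop (𝓝 t) := by
  refine tendsto_const_nhds.congr' ?_
  filter_upwards [eventually_ge_atTop ⌈|t|⌉₊] with M hM
  have ht := abs_le.1 ((Nat.le_ceil _).trans (Nat.cast_le.2 hM))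
  simp [clip, ht.1, ht.2]

variable {Ω : Type*} [MeasurableSpace Ω] {μ : Measure Ω}

lemma tendsto_integral_clip {g : Ω → ℝ} (hg : Integrable g μ) :
    Tendsto (fun M : ℕ => ∫ ω, clip M (g ω) ∂μ) atTop (𝓝 (∫ ω, g ω ∂μ)) :=
  tendsto_integral_of_dominated_convergence _
    (fun M => (continuous_clip M).comp_aestronglyMeasurable hg.1) hg.norm
    (fun M => Eventually.of_forall fun _ => abs_clip_le_abs M.cast_nonneg _)
    (Eventually.of_forall fun _ => tendsto_clip _)

lemma tendsto_covar_clip {g₁ g₂ : Ω → ℝ} (hg₁ : Integrable g₁ μ) (hg₂ : Integrable g₂ μ)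
    (hg₁₂ : Integrable (fun ω => g₁ ω * g₂ ω) μ) :
    Tendsto (fun M : ℕ => covar μ (fun ω => clip M (g₁ ω)) (fun ω => clip M (g₂ ω))) atTop
      (𝓝 (covar μ g₁ g₂)) := by
  have hprod : Tendsto (fun M : ℕ => ∫ ω, clip M (g₁ ω) * clip M (g₂ ω) ∂μ) atTop
      (𝓝 (∫ ω, g₁ ω * g₂ ω ∂μ)) := by
    refine tendsto_integral_of_dominated_convergence _
      (fun M => ((continuous_clip M).comp_aestronglyMeasurable hg₁.1).mul
        ((continuous_clip M).comp_aestronglyMeasurable hg₂.1)) hg₁₂.norm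
      (fun M => Eventually.of_forall fun _ => (abs_mul_le_mul_of_abs_le
        (abs_clip_le_abs M.cast_nonneg _) (abs_clip_le_abs M.cast_nonneg _)).trans_eq
        (abs_mul _ _).symm)
      (Eventually.of_forall fun _ => (tendsto_clip _).mul (tendsto_clip _))
  exact hprod.sub ((tendsto_integral_clip hg₁).mul (tendsto_integral_clip hg₂))

end Clipping

section NegAssocLaw

def NegAssocLaw {ι : Type*} (P : Measure (ι → ℝ)) : Prop :=
  ∀ s₁ s₂ : Set ι, Disjoint s₁ s₂ → ∀ G₁ G₂ : (ι → ℝ) → ℝ,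
    Monotone G₁ → Monotone G₂ → Measurable G₁ → Measurable G₂ →
    DependsOn G₁ s₁ → DependsOn G₂ s₂ → (∃ C, ∀ x, |G₁ x| ≤ C) → (∃ C, ∀ x, |G₂ x| ≤ C) →
    covar P G₁ G₂ ≤ 0

lemma DependsOn.exists_monotone_measurable_factor {ι : Type*} [DecidableEq ι] {A : Finset ι}
    {G : (ι → ℝ) → ℝ} (hG : Monotone G) (hGm : Measurable G) (hd : DependsOn G A) :
    ∃ f : (A → ℝ) → ℝ, Monotone f ∧ Measurable f ∧ ∀ x, f (fun i => x i) = G x := by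
  refine ⟨fun v => G fun i => if h : i ∈ A then v ⟨i, h⟩ else 0, fun v w hvw => hG fun i => ?_,
    hGm.comp (measurable_pi_lambda _ fun i => ?_), fun x => hd fun i hi => ?_⟩
  · by_cases h : i ∈ A <;> simp [h, hvw _]
  · by_cases h : i ∈ A <;> simp [h, measurable_pi_apply]
  · simp [Finset.mem_coe.1 hi]

variable {Ω : Type*} [MeasurableSpace Ω] {μ : Measure Ω} {n : ℕ} {X : Fin n → Ω → ℝ}

lemma NegAssoc.negAssocLaw_map [IsFiniteMeasure μ] (hX : NegAssoc μ X)
    (hXm : ∀ i, Measurable (X i)) : NegAssocLaw (μ.map fun ω i => X i ω) := by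
  classical
  intro s₁ s₂ hs G₁ G₂ hG₁ hG₂ hG₁m hG₂m hd₁ hd₂ ⟨C₁, hC₁⟩ ⟨C₂, hC₂⟩
  have hXm' : Measurable fun ω i => X i ω := measurable_pi_lambda _ hXm
  obtain ⟨f₁, hf₁, hf₁m, hf₁G⟩ :=
    DependsOn.exists_monotone_measurable_factor (A := s₁.toFinset) hG₁ hG₁m (by simpa using hd₁)
  obtain ⟨f₂, hf₂, hf₂m, hf₂G⟩ :=
    DependsOn.exists_monotone_measurable_factor (A := s₂.toFinset) hG₂ hG₂m (by simpa using hd₂)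
  have hcomp₁ (ω : Ω) : (f₁ fun i => X i.1 ω) = G₁ fun i => X i ω := hf₁G fun i => X i ω
  have hcomp₂ (ω : Ω) : (f₂ fun i => X i.1 ω) = G₂ fun i => X i ω := hf₂G fun i => X i ω
  have integrable_of_bound {G : (Fin n → ℝ) → ℝ} {C : ℝ} (hGm : Measurable G)
      (hC : ∀ x, |G x| ≤ C) : Integrable (fun ω => G fun i => X i ω) μ :=
    .of_bound (hGm.comp hXm').aestronglyMeasurable C (Eventually.of_forall fun ω => hC _)
  have h := hX _ _ (Set.disjoint_toFinset.2 hs) f₁ f₂ hf₁ hf₂ hf₁m hf₂m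
  simp only [hcomp₁, hcomp₂] at h
  rw [covar_map hXm'.aemeasurable hG₁m hG₂m]
  refine h (integrable_of_bound hG₁m hC₁) (integrable_of_bound hG₂m hC₂)
    (integrable_of_bound (G := fun x => G₁ x * G₂ x) (hG₁m.mul hG₂m) fun x =>
      abs_mul_le_mul_of_abs_le (hC₁ x) (hC₂ x))

lemma negAssoc_of_negAssocLaw_map (hXm : ∀ i, Measurable (X i))
    (h : NegAssocLaw (μ.map fun ω i => X i ω)) : NegAssoc μ X := by
  intro A₁ A₂ hA f₁ f₂ hf₁ hf₂ hf₁m hf₂m hi₁ hi₂ hi₁₂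
  refine le_of_tendsto (tendsto_covar_clip hi₁ hi₂ hi₁₂) (Eventually.of_forall fun M => ?_)
  have hclip {A : Finset (Fin n)} {f : (A → ℝ) → ℝ} (hf : Monotone f) (hfm : Measurable f) :
      let G := fun x : Fin n → ℝ => clip M (f (A.restrict x))
      Monotone G ∧ Measurable G ∧ DependsOn G A ∧ ∃ C, ∀ x, |G x| ≤ C :=
    ⟨(monotone_clip M).comp (hf.comp fun _ _ hxy i => hxy i),
      (continuous_clip M).measurable.comp (hfm.comp (Finset.measurable_restrict A)),
      fun _ _ hxy => congrArg (clip M ∘ f) (Finset.dependsOn_restrict A hxy),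
      ⟨M, fun _ => abs_clip_le M.cast_nonneg _⟩⟩
  obtain ⟨hG₁, hG₁m, hd₁, hC₁⟩ := hclip hf₁ hf₁m
  obtain ⟨hG₂, hG₂m, hd₂, hC₂⟩ := hclip hf₂ hf₂m
  have := h A₁ A₂ (Finset.disjoint_coe.2 hA) _ _ hG₁ hG₂ hG₁m hG₂m hd₁ hd₂ hC₁ hC₂
  rwa [covar_map (measurable_pi_lambda _ hXm).aemeasurable hG₁m hG₂m] at this

end NegAssocLaw

section Append

variable {n₁ n₂ : ℕ}

lemma Fin.monotone_append {α : Type*} [Preorder α] :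
    Monotone fun p : (Fin n₁ → α) × (Fin n₂ → α) => Fin.append p.1 p.2 := by
  intro p q hpq k
  cases k using Fin.addCases <;> simp [hpq.1 _, hpq.2 _]

lemma DependsOn.comp_append_left {α β : Type*} {G : (Fin (n₁ + n₂) → α) → β}
    {s : Set (Fin (n₁ + n₂))} (hG : DependsOn G s) (y : Fin n₂ → α) :
    DependsOn (fun x => G (Fin.append x y)) (Fin.castAdd n₂ ⁻¹' s) := by
  intro x x' hxx'
  refine hG fun k hk => ?_
  cases k using Fin.addCases <;> simp_all

lemma DependsOn.comp_append_right {α β : Type*} {G : (Fin (n₁ + n₂) → α) → β}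
    {s : Set (Fin (n₁ + n₂))} (hG : DependsOn G s) (x : Fin n₁ → α) :
    DependsOn (fun y => G (Fin.append x y)) (Fin.natAdd n₁ ⁻¹' s) := by
  intro y y' hyy'
  refine hG fun k hk => ?_
  cases k using Fin.addCases <;> simp_all

lemma NegAssocLaw.map_append_prod {P : Measure (Fin n₁ → ℝ)} {Q : Measure (Fin n₂ → ℝ)}
    [IsFiniteMeasure P] [IsFiniteMeasure Q] (hP : NegAssocLaw P) (hQ : NegAssocLaw Q) :
    NegAssocLaw ((P.prod Q).map fun p => Fin.append p.1 p.2) := by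
  intro s₁ s₂ hs G₁ G₂ hG₁ hG₂ hG₁m hG₂m hd₁ hd₂ ⟨C₁, hC₁⟩ ⟨C₂, hC₂⟩
  have happ : Measurable fun p : (Fin n₁ → ℝ) × (Fin n₂ → ℝ) => Fin.append p.1 p.2 :=
    (Fin.continuous_append n₁ n₂).measurable
  have hF₁m : Measurable fun p : (Fin n₁ → ℝ) × (Fin n₂ → ℝ) => G₁ (Fin.append p.1 p.2) :=
    hG₁m.comp happ
  have hF₂m : Measurable fun p : (Fin n₁ → ℝ) × (Fin n₂ → ℝ) => G₂ (Fin.append p.1 p.2) :=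
    hG₂m.comp happ
  have hsection (y : Fin n₂ → ℝ) : Measurable fun x : Fin n₁ → ℝ => Fin.append x y :=
    happ.comp (measurable_id.prodMk measurable_const)
  have average_bound {G : (Fin (n₁ + n₂) → ℝ) → ℝ} {C : ℝ} (hC : ∀ x, |G x| ≤ C)
      (y : Fin n₂ → ℝ) : |∫ x, G (Fin.append x y) ∂P| ≤ C * P.real Set.univ :=
    norm_integral_le_of_norm_le_const (f := fun x => G (Fin.append x y))
      (Eventually.of_forall fun _ => hC _)
  have average_monotone {G : (Fin (n₁ + n₂) → ℝ) → ℝ} {C : ℝ} (hG : Monotone G)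
      (hGm : Measurable G) (hC : ∀ x, |G x| ≤ C) :
      Monotone fun y => ∫ x, G (Fin.append x y) ∂P := by
    have hint (y : Fin n₂ → ℝ) : Integrable (fun x => G (Fin.append x y)) P :=
      .of_bound (hGm.comp (hsection y)).aestronglyMeasurable C (Eventually.of_forall fun _ => hC _)
    exact fun y y' hyy' => integral_mono (hint y) (hint y') fun x =>
      hG (Fin.monotone_append (Prod.mk_le_mk.2 ⟨le_rfl, hyy'⟩))
  rw [covar_map happ.aemeasurable hG₁m hG₂m, covar_prod hF₁m hF₂m (fun _ => hC₁ _) fun _ => hC₂ _]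
  refine add_nonpos (integral_nonpos fun y => ?_) ?_
  · exact hP _ _ (hs.preimage _) _ _
      (fun x x' h => hG₁ (Fin.monotone_append (Prod.mk_le_mk.2 ⟨h, le_rfl⟩)))
      (fun x x' h => hG₂ (Fin.monotone_append (Prod.mk_le_mk.2 ⟨h, le_rfl⟩)))
      (hG₁m.comp (hsection y)) (hG₂m.comp (hsection y))
      (hd₁.comp_append_left y) (hd₂.comp_append_left y) ⟨C₁, fun _ => hC₁ _⟩ ⟨C₂, fun _ => hC₂ _⟩
  · exact hQ _ _ (hs.preimage _) _ _ (average_monotone hG₁ hG₁m hC₁) (average_monotone hG₂ hG₂m hC₂)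
      hF₁m.stronglyMeasurable.integral_prod_left'.measurable
      hF₂m.stronglyMeasurable.integral_prod_left'.measurable
      (fun y y' h => congrArg (fun F => ∫ x, F x ∂P) (funext fun x => hd₁.comp_append_right x h))
      (fun y y' h => congrArg (fun F => ∫ x, F x ∂P) (funext fun x => hd₂.comp_append_right x h))
      ⟨_, average_bound hC₁⟩ ⟨_, average_bound hC₂⟩

end Append

/-- The union of two independent sets of negatively associated random variables is
negatively associated. -/
theorem negAssoc_union_of_indep {Ω : Type*} [MeasurableSpace Ω] (μ : Measure Ω)
    [IsProbabilityMeasure μ] {n₁ n₂ : ℕ} (X : Fin n₁ → Ω → ℝ) (Y : Fin n₂ → Ω → ℝ)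
    (hXm : ∀ i, Measurable (X i)) (hYm : ∀ j, Measurable (Y j))
    (hX : NegAssoc μ X) (hY : NegAssoc μ Y)
    (hindep : IndepFun (fun ω (i : Fin n₁) => X i ω) (fun ω (j : Fin n₂) => Y j ω) μ) :
    NegAssoc μ (fun i : Fin (n₁ + n₂) =>
      Fin.addCases (motive := fun _ => Ω → ℝ) X Y i) := by
  have hXm' : Measurable fun ω i => X i ω := measurable_pi_lambda _ hXm
  have hYm' : Measurable fun ω j => Y j ω := measurable_pi_lambda _ hYm
  have hlaw : μ.map (fun ω k => Fin.addCases (motive := fun _ => Ω → ℝ) X Y k ω) =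
      ((μ.map fun ω i => X i ω).prod (μ.map fun ω j => Y j ω)).map
        fun p => Fin.append p.1 p.2 := by
    rw [← (indepFun_iff_map_prod_eq_prod_map_map hXm'.aemeasurable hYm'.aemeasurable).1 hindep,
      Measure.map_map (Fin.continuous_append n₁ n₂).measurable (hXm'.prodMk hYm')]
    congr with ω k
    cases k using Fin.addCases <;> simp
  refine negAssoc_of_negAssocLaw_map (fun k => ?_) ?_
  · cases k using Fin.addCases <;> simp [hXm, hYm]
  · rw [hlaw]
    exact (hX.negAssocLaw_map hXm).map_append_prod (hY.negAssocLaw_map hYm)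
end

section
/- There is no triple of random variables (U_1, U_2, U_3) taking values in (0,1)³ such that each U_i is distributed Uniform(0,1) and, almost surely, both U_1 + U_2 + U_3 = 3/2 and Φ^{−1}(U_1) + Φ^{−1}(U_2) + Φ^{−1}(U_3) = 0, where Φ is the cumulative distribution function of the standard normal distribution N(0,1) and Φ^{−1} is its inverse on (0,1). -/
open MeasureTheory Real Set Filter Topology

noncomputable def stdNormalCDF (x : ℝ) : ℝ :=
  ∫ t in Set.Iic x, Real.exp (-(t ^ 2) / 2) / Real.sqrt (2 * Real.pi)

noncomputable def stdNormalCDFInv : ℝ → ℝ :=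
  Function.invFun stdNormalCDF

namespace StdNormalAux

noncomputable def f (t : ℝ) : ℝ := Real.exp (-(t ^ 2) / 2) / Real.sqrt (2 * Real.pi)

lemma f_eq : f = ProbabilityTheory.gaussianPDFReal 0 1 := by
  funext x
  simp only [f, ProbabilityTheory.gaussianPDFReal, NNReal.coe_one, mul_one, sub_zero]
  rw [div_eq_inv_mul]

lemma f_pos (t : ℝ) : 0 < f t := by
  rw [f_eq]; exact ProbabilityTheory.gaussianPDFReal_pos 0 1 t one_ne_zero

lemma f_cont : Continuous f := by
  unfold f
  fun_prop

lemma f_int : Integrable f := by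
  rw [f_eq]; exact ProbabilityTheory.integrable_gaussianPDFReal 0 1

lemma f_total : ∫ t, f t = 1 := by
  rw [f_eq]; exact ProbabilityTheory.integral_gaussianPDFReal_eq_one 0 one_ne_zero

lemma f_even (t : ℝ) : f (-t) = f t := by simp [f]

lemma f_anti {t b : ℝ} (ht : 0 ≤ t) (hb : 0 < b) : f (t + b) < f t := by
  have h : t ^ 2 < (t + b) ^ 2 := by nlinarith
  have hs := Real.sqrt_pos.2 (by positivity : (0:ℝ) < 2 * Real.pi)
  unfold f
  exact (div_lt_div_iff_of_pos_right hs).2 (Real.exp_lt_exp.2 (by linarith))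

lemma cdf_def (x : ℝ) : stdNormalCDF x = ∫ t in Set.Iic x, f t := rfl

lemma cdf_sub (a b : ℝ) : stdNormalCDF b - stdNormalCDF a = ∫ t in a..b, f t := by
  rw [cdf_def, cdf_def]
  exact intervalIntegral.integral_Iic_sub_Iic f_int.integrableOn f_int.integrableOn

lemma cdf_strictMono : StrictMono stdNormalCDF := by
  intro a b hab
  have h : 0 < ∫ t in a..b, f t :=
    intervalIntegral.intervalIntegral_pos_of_pos (f_int.intervalIntegrable) f_pos hab
  have := cdf_sub a b
  linarith

lemma cdf_neg (x : ℝ) : stdNormalCDF (-x) = 1 - stdNormalCDF x := by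
  have h1 : (∫ t in Set.Iic (-x), f (-t)) = ∫ t in Set.Ioi x, f t := by
    simpa using integral_comp_neg_Iic (-x) f
  have h2 : (∫ t in Set.Iic (-x), f (-t)) = ∫ t in Set.Iic (-x), f t := by
    simp_rw [f_even]
  have h3 : (∫ t in Set.Iic x, f t) + (∫ t in Set.Ioi x, f t) = ∫ t, f t :=
    intervalIntegral.integral_Iic_add_Ioi f_int.integrableOn f_int.integrableOn
  rw [cdf_def, cdf_def, ← h2, h1]
  rw [f_total] at h3
  linarith

lemma cdf_zero : stdNormalCDF 0 = 1 / 2 := by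
  have := cdf_neg 0
  rw [neg_zero] at this
  linarith

lemma cdf_cont : Continuous stdNormalCDF := by
  have hprim : Continuous fun x => ∫ t in (0:ℝ)..x, f t :=
    intervalIntegral.continuous_primitive (fun a b => f_int.intervalIntegrable) 0
  have : stdNormalCDF = fun x => (∫ t in (0:ℝ)..x, f t) + stdNormalCDF 0 := by
    funext x
    have := cdf_sub 0 x
    linarith
  rw [this]
  exact hprim.add continuous_const

lemma cdf_tendsto_atTop : Tendsto stdNormalCDF atTop (𝓝 1) := by
  have h := (aecover_Iic (tendsto_id (α := ℝ))).integral_tendsto_of_countably_generated f_int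
  rw [f_total] at h
  exact h

lemma cdf_tendsto_atBot : Tendsto stdNormalCDF atBot (𝓝 0) := by
  have h : Tendsto (fun x : ℝ => stdNormalCDF (-x)) atBot (𝓝 1) :=
    cdf_tendsto_atTop.comp tendsto_neg_atBot_atTop
  have h2 : Tendsto (fun x : ℝ => 1 - stdNormalCDF (-x)) atBot (𝓝 (1 - 1)) :=
    tendsto_const_nhds.sub h
  simp only [sub_self] at h2
  refine h2.congr fun x => ?_
  have := cdf_neg (-x)
  rw [neg_neg] at this
  linarith

lemma cdf_surj {u : ℝ} (hu : u ∈ Set.Ioo (0:ℝ) 1) : ∃ x, stdNormalCDF x = u := by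
  obtain ⟨a, ha⟩ : ∃ a, stdNormalCDF a < u :=
    (cdf_tendsto_atBot.eventually_lt_const hu.1).exists
  obtain ⟨b, hb⟩ : ∃ b, u < stdNormalCDF b :=
    (cdf_tendsto_atTop.eventually_const_lt hu.2).exists
  have hab : a ≤ b := by
    by_contra h
    push_neg at h
    exact absurd (cdf_strictMono h) (by linarith)
  obtain ⟨x, _, hx⟩ := intermediate_value_Icc hab cdf_cont.continuousOn ⟨ha.le, hb.le⟩
  exact ⟨x, hx⟩

lemma inv_eq {u : ℝ} (hu : u ∈ Set.Ioo (0:ℝ) 1) : stdNormalCDF (stdNormalCDFInv u) = u :=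
  Function.invFun_eq (cdf_surj hu)

lemma incr {a b : ℝ} (ha : 0 < a) (hb : 0 < b) :
    stdNormalCDF (a + b) - stdNormalCDF b < stdNormalCDF a - stdNormalCDF 0 := by
  have h1 : stdNormalCDF (a + b) - stdNormalCDF b = ∫ t in (0:ℝ)..a, f (t + b) := by
    rw [intervalIntegral.integral_comp_add_right, zero_add, ← cdf_sub]
  have h2 : stdNormalCDF a - stdNormalCDF 0 = ∫ t in (0:ℝ)..a, f t := cdf_sub 0 a
  have hpos : 0 < ∫ t in (0:ℝ)..a, (f t - f (t + b)) := by
    apply intervalIntegral.intervalIntegral_pos_of_pos_on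
    · exact (f_int.intervalIntegrable.sub ((f_int.comp_add_right b).intervalIntegrable))
    · intro t ht
      have := f_anti ht.1.le hb
      linarith
    · exact ha
  rw [intervalIntegral.integral_sub f_int.intervalIntegrable
    ((f_int.comp_add_right b).intervalIntegrable)] at hpos
  linarith

lemma key_pos {x y : ℝ} (hx : 0 < x) (hy : 0 < y) :
    3 / 2 < stdNormalCDF x + stdNormalCDF y + stdNormalCDF (-(x + y)) := by
  have h := incr hx hy
  have hn := cdf_neg (x + y)
  have h0 := cdf_zero
  linarith

lemma key_neg {x y : ℝ} (hx : x < 0) (hy : y < 0) :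
    stdNormalCDF x + stdNormalCDF y + stdNormalCDF (-(x + y)) < 3 / 2 := by
  have h := key_pos (by linarith : 0 < -x) (by linarith : 0 < -y)
  have h1 := cdf_neg x
  have h2 := cdf_neg y
  have h3 := cdf_neg (-(x + y))
  rw [neg_neg] at h3
  have : -x + -y = -(x + y) := by ring
  rw [this, neg_neg] at h
  have h4 := cdf_neg (x + y)
  linarith


lemma crux {u1 u2 u3 : ℝ} (h1 : u1 ∈ Set.Ioo (0:ℝ) 1) (h2 : u2 ∈ Set.Ioo (0:ℝ) 1)
    (h3 : u3 ∈ Set.Ioo (0:ℝ) 1) (hsum : u1 + u2 + u3 = 3 / 2)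
    (hg : stdNormalCDFInv u1 + stdNormalCDFInv u2 + stdNormalCDFInv u3 = 0) :
    u1 = 1 / 2 ∨ u2 = 1 / 2 ∨ u3 = 1 / 2 := by
  set x1 := stdNormalCDFInv u1 with hx1def
  set x2 := stdNormalCDFInv u2 with hx2def
  set x3 := stdNormalCDFInv u3 with hx3def
  have e1 : stdNormalCDF x1 = u1 := inv_eq h1
  have e2 : stdNormalCDF x2 = u2 := inv_eq h2
  have e3 : stdNormalCDF x3 = u3 := inv_eq h3
  by_contra hcon
  push_neg at hcon
  obtain ⟨n1, n2, n3⟩ := hcon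
  have hx1 : x1 ≠ 0 := fun h => n1 (by rw [← e1, h, cdf_zero])
  have hx2 : x2 ≠ 0 := fun h => n2 (by rw [← e2, h, cdf_zero])
  have hx3 : x3 ≠ 0 := fun h => n3 (by rw [← e3, h, cdf_zero])
  rcases hx1.lt_or_gt with p1 | p1 <;> rcases hx2.lt_or_gt with p2 | p2 <;>
    rcases hx3.lt_or_gt with p3 | p3
  · have e : -(x1 + x2) = x3 := by linarith
    have := key_neg p1 p2; rw [e] at this; linarith
  · have e : -(x1 + x2) = x3 := by linarith
    have := key_neg p1 p2; rw [e] at this; linarith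
  · have e : -(x1 + x3) = x2 := by linarith
    have := key_neg p1 p3; rw [e] at this; linarith
  · have e : -(x2 + x3) = x1 := by linarith
    have := key_pos p2 p3; rw [e] at this; linarith
  · have e : -(x2 + x3) = x1 := by linarith
    have := key_neg p2 p3; rw [e] at this; linarith
  · have e : -(x1 + x3) = x2 := by linarith
    have := key_pos p1 p3; rw [e] at this; linarith
  · have e : -(x1 + x2) = x3 := by linarith
    have := key_pos p1 p2; rw [e] at this; linarith
  · have e : -(x1 + x2) = x3 := by linarith
    have := key_pos p1 p2; rw [e] at this; linarith

end StdNormalAux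

/-- There is no triple of Uniform(0,1) random variables `(U₁, U₂, U₃)` taking values in
`(0,1)³` with, almost surely, `U₁ + U₂ + U₃ = 3/2` and
`Φ⁻¹(U₁) + Φ⁻¹(U₂) + Φ⁻¹(U₃) = 0`. -/
theorem no_triple_uniform_normal_extreme_antithesis :
    ¬ ∃ (Ω : Type) (_ : MeasurableSpace Ω) (μ : Measure Ω) (U : Fin 3 → Ω → ℝ),
      IsProbabilityMeasure μ ∧
      (∀ i, Measurable (U i)) ∧
      (∀ i, ∀ ω, U i ω ∈ Set.Ioo (0 : ℝ) 1) ∧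
      (∀ i, μ.map (U i) = volume.restrict (Set.Ioo (0 : ℝ) 1)) ∧
      (∀ᵐ ω ∂μ,
        U 0 ω + U 1 ω + U 2 ω = 3 / 2 ∧
        stdNormalCDFInv (U 0 ω) + stdNormalCDFInv (U 1 ω) + stdNormalCDFInv (U 2 ω) = 0) := by
  rintro ⟨Ω, mΩ, μ, U, hprob, hmeas, hmem, hmap, hae⟩
  have hnull : ∀ i, μ {ω | U i ω = 1 / 2} = 0 := by
    intro i
    have h1 : μ.map (U i) {(1:ℝ)/2} = 0 := by
      rw [hmap i, Measure.restrict_apply (measurableSet_singleton _)]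
      exact measure_mono_null Set.inter_subset_left Real.volume_singleton
    rw [Measure.map_apply (hmeas i) (measurableSet_singleton _)] at h1
    exact h1
  have hne : ∀ i, ∀ᵐ ω ∂μ, U i ω ≠ 1 / 2 := by
    intro i
    simpa only [ae_iff, not_not] using hnull i
  have hfalse : ∀ᵐ ω ∂μ, False := by
    filter_upwards [hae, hne 0, hne 1, hne 2] with ω hω n0 n1 n2
    obtain ⟨hsum, hg⟩ := hω
    rcases StdNormalAux.crux (hmem 0 ω) (hmem 1 ω) (hmem 2 ω) hsum hg with h | h | h
    · exact n0 h
    · exact n1 h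
    · exact n2 h
  have h0 : μ Set.univ = 0 := by simpa [ae_iff] using hfalse
  have h1 : μ Set.univ = 1 := measure_univ
  rw [h0] at h1
  exact zero_ne_one h1
end

section
/- Let r_1 be distributed Uniform(0,1), let r_2 = {r_1 + 1/2} and r_3 = 1 − {2 r_1}, where {x} denotes the fractional part of x, and let σ be a uniformly distributed random permutation of {1, 2, 3}, independent of r_1. Define U_i = r_{σ(i)} for i = 1, 2, 3. Then {U_1, U_2, U_3} are pairwise negatively associated; equivalently, for every i ≠ j and all u, v ∈ ℝ, P(U_i ≤ u, U_j ≤ v) ≤ P(U_i ≤ u) · P(U_j ≤ v). -/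
/-!
On `[0, 1/2)` the three displacements are `t`, `t + 1/2` and `1 - 2t`; on `[1/2, 1)` they are the
same three functions of `t = x - 1/2` with the first two exchanged. As `σ` is uniform and
independent of `r₁`, that exchange is absorbed by reindexing the permutations. Hence every `U_i`
is uniform on `[0, 1]`, and `P(U_i ≤ u, U_j ≤ v)` is a third of the sum, over the six ordered pairs
`a ≠ b`, of the lengths of the intervals `{t ∈ [0, 1/2) : g_a t ≤ u, g_b t ≤ v}`. These lengths are
piecewise linear in `(u, v)`, and their sum is at most `3uv` on the unit square, which is checked
on the regions cut out by `u = 1/2` and `v = 1/2` (with `u ≤ v` by symmetry).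
-/

open MeasureTheory Set
open Equiv (Perm swap mulLeft)
open scoped ENNReal

theorem measure_mem_of_uniform_index {Ω α ι : Type*} [MeasurableSpace Ω] [MeasurableSpace α]
    [Fintype ι] {μ : Measure Ω} [IsFiniteMeasure μ] {r : Ω → α} (hr : Measurable r)
    {σ : Ω → ι} {c : ℝ≥0∞} (hc : Fintype.card ι * c = 1)
    (hσ : ∀ π s, MeasurableSet s → μ ({ω | σ ω = π} ∩ r ⁻¹' s) = c * μ (r ⁻¹' s))
    {s : ι → Set α} (hs : ∀ π, MeasurableSet (s π)) :
    μ {ω | r ω ∈ s (σ ω)} = ∑ π, c * μ (r ⁻¹' s π) := by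
  -- `σ` need not be measurable, so the lower bound comes from the union bound on the complement.
  have union_bound : ∀ t : ι → Set α, (∀ π, MeasurableSet (t π)) →
      μ {ω | r ω ∈ t (σ ω)} ≤ ∑ π, c * μ (r ⁻¹' t π) := fun t ht =>
    calc μ {ω | r ω ∈ t (σ ω)} = μ (⋃ π, {ω | σ ω = π} ∩ r ⁻¹' t π) := by
          congr 1; ext ω; simp [eq_comm]
      _ ≤ ∑ π, μ ({ω | σ ω = π} ∩ r ⁻¹' t π) := measure_iUnion_fintype_le μ _
      _ = ∑ π, c * μ (r ⁻¹' t π) := Finset.sum_congr rfl fun π _ => hσ π _ (ht π)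
  have htotal : ∑ π, c * μ (r ⁻¹' s π) + ∑ π, c * μ (r ⁻¹' (s π)ᶜ) = μ univ := by
    simp_rw [← Finset.sum_add_distrib, ← mul_add, preimage_compl,
      measure_add_measure_compl (hr (hs _))]
    rw [Finset.sum_const, Finset.card_univ, nsmul_eq_mul, ← mul_assoc, hc, one_mul]
  have hcompl : μ {ω | r ω ∈ s (σ ω)}ᶜ ≤ ∑ π, c * μ (r ⁻¹' (s π)ᶜ) :=
    union_bound (fun π => (s π)ᶜ) fun π => (hs π).compl
  have hfin : ∑ π, c * μ (r ⁻¹' (s π)ᶜ) ≠ ∞ :=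
    ne_top_of_le_ne_top (htotal ▸ measure_ne_top μ univ) le_add_self
  refine le_antisymm (union_bound s hs) ((ENNReal.add_le_add_iff_right hfin).1 ?_)
  calc _ = μ univ := htotal
    _ ≤ μ {ω | r ω ∈ s (σ ω)} + μ {ω | r ω ∈ s (σ ω)}ᶜ := measure_univ_le_add_compl _
    _ ≤ _ := by gcongr

theorem sum_perm_fin_three {M : Type*} [AddCommMonoid M] (f : Perm (Fin 3) → M) :
    ∑ π, f π = f 1 + f (swap 0 1) + f (swap 0 2) + f (swap 1 2) + f (swap 0 1 * swap 1 2) +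
      f (swap 1 2 * swap 0 1) := by
  rw [show (Finset.univ : Finset (Perm (Fin 3))) =
    {1, swap 0 1, swap 0 2, swap 1 2, swap 0 1 * swap 1 2, swap 1 2 * swap 0 1} by decide]
  simp (disch := decide) only [Finset.sum_insert, Finset.sum_singleton, add_assoc]

theorem sum_perm_fin_three_apply_pair {M : Type*} [AddCommMonoid M] (g : Fin 3 → Fin 3 → M)
    {i j : Fin 3} (hij : i ≠ j) :
    ∑ π : Perm (Fin 3), g (π i) (π j) = g 0 1 + g 0 2 + g 1 0 + g 1 2 + g 2 0 + g 2 1 := by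
  rw [sum_perm_fin_three]
  fin_cases i <;> fin_cases j <;> simp_all [Equiv.swap_apply_def] <;> abel

theorem volume_Ico_inter_Icc_inter_Icc (p q a b c d : ℝ) :
    volume (Ico p q ∩ Icc a b ∩ Icc c d) =
      ENNReal.ofReal (min q (min b d) - max p (max a c)) := by
  refine le_antisymm ?_ ?_
  · calc volume (Ico p q ∩ Icc a b ∩ Icc c d)
        ≤ volume (Icc (max p (max a c)) (min q (min b d))) := measure_mono fun x hx => by
          simp only [mem_inter_iff, mem_Ico, mem_Icc] at hx
          simp only [mem_Icc, max_le_iff, le_min_iff]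
          exact ⟨⟨hx.1.1.1, hx.1.2.1, hx.2.1⟩, hx.1.1.2.le, hx.1.2.2, hx.2.2⟩
      _ = _ := Real.volume_Icc
  · calc ENNReal.ofReal (min q (min b d) - max p (max a c))
        = volume (Ioo (max p (max a c)) (min q (min b d))) := Real.volume_Ioo.symm
      _ ≤ volume (Ico p q ∩ Icc a b ∩ Icc c d) := measure_mono fun x hx => by
          simp only [mem_Ioo, max_lt_iff, lt_min_iff] at hx
          simp only [mem_inter_iff, mem_Ico, mem_Icc]
          exact ⟨⟨⟨hx.1.1.le, hx.2.1⟩, hx.1.2.1.le, hx.2.2.1.le⟩, hx.1.2.2.le, hx.2.2.2.le⟩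

theorem volume_inter_Ioo_zero_one (s : Set ℝ) :
    volume (s ∩ Ioo 0 1) =
      volume (s ∩ Ico 0 (1 / 2)) + volume ((· + 1 / 2) ⁻¹' s ∩ Ico 0 (1 / 2)) := by
  have hshift : (· + 1 / 2) ⁻¹' (s ∩ Ico (1 / 2) 1) = (· + 1 / 2) ⁻¹' s ∩ Ico (0 : ℝ) (1 / 2) := by
    rw [preimage_inter, preimage_add_const_Ico, sub_self, sub_half]
  rw [measure_congr (ae_eq_set_inter (ae_eq_refl s) Ioo_ae_eq_Ico),
    ← Measure.restrict_apply' measurableSet_Ico,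
    ← Ico_union_Ico_eq_Ico (by norm_num : (0 : ℝ) ≤ 1 / 2) (by norm_num : (1 / 2 : ℝ) ≤ 1),
    Measure.restrict_union (Ico_disjoint_Ico_same) measurableSet_Ico, Measure.add_apply,
    Measure.restrict_apply' measurableSet_Ico, Measure.restrict_apply' measurableSet_Ico,
    ← measure_preimage_add_right volume (1 / 2) (s ∩ Ico (1 / 2) 1), hshift]

noncomputable section

-- `displacement k r₁` is the paper's `r_{k+1}`.
def displacement (k : Fin 3) (x : ℝ) : ℝ := ![x, Int.fract (x + 1 / 2), 1 - Int.fract (2 * x)] k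

def branch (k : Fin 3) (t : ℝ) : ℝ := ![t, t + 1 / 2, 1 - 2 * t] k

def sublevelLo (k : Fin 3) (u : ℝ) : ℝ := ![0, 0, (1 - u) / 2] k

def sublevelHi (k : Fin 3) (u : ℝ) : ℝ := ![u, u - 1 / 2, 1 / 2] k

def jointLength (a b : Fin 3) (u v : ℝ) : ℝ :=
  max (min (1 / 2) (min (sublevelHi a u) (sublevelHi b v)) -
    max 0 (max (sublevelLo a u) (sublevelLo b v))) 0

end

theorem measurable_displacement (k : Fin 3) : Measurable (displacement k) := by
  fin_cases k
  · exact measurable_id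
  · exact (measurable_id.add_const _).fract
  · exact measurable_const.sub (measurable_const.mul measurable_id).fract

theorem displacement_eq_branch {t : ℝ} (ht : t ∈ Ico 0 (1 / 2)) (k : Fin 3) :
    displacement k t = branch k t := by
  obtain ⟨h0, h1⟩ := ht
  fin_cases k
  · rfl
  · exact Int.fract_eq_self.2 ⟨by linarith, by linarith⟩
  · simp only [displacement, branch, Fin.reduceFinMk, Matrix.cons_val]
    rw [Int.fract_eq_self.2 ⟨by linarith, by linarith⟩]

theorem displacement_add_half {t : ℝ} (ht : t ∈ Ico 0 (1 / 2)) (k : Fin 3) :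
    displacement k (t + 1 / 2) = branch (swap 0 1 k) t := by
  obtain ⟨h0, h1⟩ := ht
  fin_cases k
  · rfl
  · simp only [displacement, branch, Fin.reduceFinMk, Matrix.cons_val, Equiv.swap_apply_right]
    rw [add_assoc, add_halves, Int.fract_add_one, Int.fract_eq_self.2 ⟨h0, by linarith⟩]
  · simp only [displacement, branch, Fin.reduceFinMk, Matrix.cons_val]
    rw [Equiv.swap_apply_of_ne_of_ne (by decide) (by decide), mul_add,
      mul_one_div_cancel two_ne_zero, Int.fract_add_one,
      Int.fract_eq_self.2 ⟨by linarith, by linarith⟩]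
    rfl

theorem branch_le_iff {t : ℝ} (ht : t ∈ Ico 0 (1 / 2)) (k : Fin 3) (u : ℝ) :
    branch k t ≤ u ↔ t ∈ Icc (sublevelLo k u) (sublevelHi k u) := by
  obtain ⟨h0, h1⟩ := ht
  fin_cases k <;> simp only [branch, sublevelLo, sublevelHi, Fin.reduceFinMk, Matrix.cons_val,
    Fin.zero_eta, mem_Icc] <;>
    exact ⟨fun h => ⟨by linarith, by linarith⟩, fun h => by linarith [h.1, h.2]⟩

theorem volume_setOf_branch_le (a b : Fin 3) (u v : ℝ) :
    volume ({t | branch a t ≤ u ∧ branch b t ≤ v} ∩ Ico 0 (1 / 2)) =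
      ENNReal.ofReal (jointLength a b u v) := by
  have hset : {t | branch a t ≤ u ∧ branch b t ≤ v} ∩ Ico 0 (1 / 2) =
      Ico 0 (1 / 2) ∩ Icc (sublevelLo a u) (sublevelHi a u) ∩
        Icc (sublevelLo b v) (sublevelHi b v) := by
    ext t
    simp only [mem_inter_iff, mem_ofPred_eq]
    constructor
    · rintro ⟨⟨ha, hb⟩, ht⟩
      exact ⟨⟨ht, (branch_le_iff ht a u).1 ha⟩, (branch_le_iff ht b v).1 hb⟩
    · rintro ⟨⟨ht, ha⟩, hb⟩
      exact ⟨⟨(branch_le_iff ht a u).2 ha, (branch_le_iff ht b v).2 hb⟩, ht⟩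
  rw [hset, volume_Ico_inter_Icc_inter_Icc, jointLength, ENNReal.ofReal_max]
  simp

theorem volume_setOf_displacement_le (a b : Fin 3) (u v : ℝ) :
    volume ({x | displacement a x ≤ u ∧ displacement b x ≤ v} ∩ Ioo 0 1) =
      ENNReal.ofReal (jointLength a b u v) +
        ENNReal.ofReal (jointLength (swap 0 1 a) (swap 0 1 b) u v) := by
  rw [volume_inter_Ioo_zero_one, ← volume_setOf_branch_le, ← volume_setOf_branch_le]
  congr 1 <;> congr 1 <;> ext t <;> simp only [mem_inter_iff, mem_ofPred_eq, mem_preimage] <;>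
    refine and_congr_left fun ht => ?_
  · rw [displacement_eq_branch ht, displacement_eq_branch ht]
  · rw [displacement_add_half ht, displacement_add_half ht]

theorem jointLength_nonneg (a b : Fin 3) (u v : ℝ) : 0 ≤ jointLength a b u v :=
  le_max_right _ _

theorem jointLength_comm (a b : Fin 3) (u v : ℝ) : jointLength a b u v = jointLength b a v u := by
  simp only [jointLength, min_comm (sublevelHi a u), max_comm (sublevelLo a u)]

theorem sum_jointLength_diag (u : ℝ) :
    jointLength 0 0 u u + jointLength 1 1 u u + jointLength 2 2 u u = 3 / 2 * max 0 (min u 1) := by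
  simp only [jointLength, sublevelLo, sublevelHi, Matrix.cons_val, min_self, max_self]
  rcases le_total u 0 with h0 | h0
  · simp (disch := grind) only [min_eq_left, min_eq_right, max_eq_left, max_eq_right]
    norm_num
  rcases le_total u (1 / 2) with h1 | h1
  · simp (disch := grind) only [min_eq_left, min_eq_right, max_eq_left, max_eq_right]
    ring
  rcases le_total u 1 with h2 | h2
  · simp (disch := grind) only [min_eq_left, min_eq_right, max_eq_left, max_eq_right]
    ring
  · simp (disch := grind) only [min_eq_left, min_eq_right, max_eq_left, max_eq_right]
    norm_num

theorem sum_jointLength_offDiag_le_of_le {u v : ℝ} (hu : 0 ≤ u) (huv : u ≤ v) (hv : v ≤ 1) :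
    jointLength 0 1 u v + jointLength 0 2 u v + jointLength 1 0 u v + jointLength 1 2 u v +
      jointLength 2 0 u v + jointLength 2 1 u v ≤ 3 * u * v := by
  simp only [jointLength, sublevelLo, sublevelHi, Matrix.cons_val]
  rcases le_total v (1 / 2) with hv' | hv'
  · simp (disch := grind) only [min_eq_left, min_eq_right, max_eq_left, max_eq_right]
    simp only [max_def]
    split_ifs <;> nlinarith [mul_nonneg (sub_nonneg.2 (huv.trans hv')) (sub_nonneg.2 hv')]
  rcases le_total u (1 / 2) with hu' | hu'
  · simp (disch := grind) only [min_eq_left, min_eq_right, max_eq_left, max_eq_right]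
    simp only [max_def, min_def]
    split_ifs <;> nlinarith [mul_nonneg hu (sub_nonneg.2 hv'),
      mul_nonneg (sub_nonneg.2 hu') (sub_nonneg.2 hv)]
  · simp (disch := grind) only [min_eq_left, min_eq_right, max_eq_left, max_eq_right]
    simp only [max_def]
    split_ifs <;> nlinarith [mul_nonneg (sub_nonneg.2 hu') (sub_nonneg.2 (hu'.trans huv)),
      mul_nonneg (sub_nonneg.2 (huv.trans hv)) (sub_nonneg.2 hv)]

theorem sum_jointLength_offDiag_le {u v : ℝ} (hu : u ∈ Icc 0 1) (hv : v ∈ Icc 0 1) :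
    jointLength 0 1 u v + jointLength 0 2 u v + jointLength 1 0 u v + jointLength 1 2 u v +
      jointLength 2 0 u v + jointLength 2 1 u v ≤ 3 * u * v := by
  rcases le_total u v with huv | hvu
  · exact sum_jointLength_offDiag_le_of_le hu.1 huv hv.2
  · have := sum_jointLength_offDiag_le_of_le hv.1 hvu hu.2
    simp only [jointLength_comm _ _ v u] at this
    linarith

theorem ofReal_clamp_eq_zero_or_one {w : ℝ} (hw : w ∉ Icc 0 1) :
    ENNReal.ofReal (max 0 (min w 1)) = 0 ∨ ENNReal.ofReal (max 0 (min w 1)) = 1 := by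
  rcases not_and_or.1 hw with hw | hw
  · left
    simp [(min_le_left w 1).trans (not_le.1 hw).le]
  · right
    simp [(not_le.1 hw).le]

theorem measure_inter_le_mul_of_eq_zero_or_one {Ω : Type*} [MeasurableSpace Ω] {μ : Measure Ω}
    {s : Set Ω} (h : μ s = 0 ∨ μ s = 1) (t : Set Ω) : μ (s ∩ t) ≤ μ s * μ t := by
  rcases h with h | h
  · rw [h, zero_mul]
    exact (measure_mono_null inter_subset_left h).le
  · rw [h, one_mul]
    exact measure_mono inter_subset_right

section

variable {Ω : Type*} [MeasurableSpace Ω] {μ : Measure Ω} [IsFiniteMeasure μ] {r : Ω → ℝ}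
  {σ : Ω → Perm (Fin 3)}

theorem measure_displacement_le_and_le (hr : Measurable r)
    (hrlaw : μ.map r = volume.restrict (Ioo 0 1))
    (hσ : ∀ (π : Perm (Fin 3)) (s : Set ℝ), MeasurableSet s →
      μ ({ω | σ ω = π} ∩ r ⁻¹' s) = (6 : ℝ≥0∞)⁻¹ * μ (r ⁻¹' s))
    (i j : Fin 3) (u v : ℝ) :
    μ {ω | displacement (σ ω i) (r ω) ≤ u ∧ displacement (σ ω j) (r ω) ≤ v} =
      ENNReal.ofReal ((∑ π : Perm (Fin 3), jointLength (π i) (π j) u v) / 3) := by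
  have hcard : (Fintype.card (Perm (Fin 3)) : ℝ≥0∞) * 6⁻¹ = 1 := by
    rw [Fintype.card_perm, Fintype.card_fin]
    exact ENNReal.mul_inv_cancel (by norm_num [Nat.factorial]) (by norm_num [Nat.factorial])
  have hlaw : ∀ s, MeasurableSet s → μ (r ⁻¹' s) = volume (s ∩ Ioo 0 1) := fun s hs => by
    rw [← Measure.map_apply hr hs, hrlaw, Measure.restrict_apply hs]
  let S : Perm (Fin 3) → Set ℝ := fun π => {x | displacement (π i) x ≤ u ∧ displacement (π j) x ≤ v}
  have hS : ∀ π, MeasurableSet (S π) := fun π =>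
    (measurableSet_le (measurable_displacement _) measurable_const).inter
      (measurableSet_le (measurable_displacement _) measurable_const)
  calc μ {ω | r ω ∈ S (σ ω)}
      = ∑ π, (6 : ℝ≥0∞)⁻¹ * μ (r ⁻¹' S π) := measure_mem_of_uniform_index hr hcard hσ hS
    _ = ∑ π, ENNReal.ofReal
          ((jointLength (π i) (π j) u v + jointLength ((swap 0 1 * π : Perm (Fin 3)) i)
            ((swap 0 1 * π : Perm (Fin 3)) j) u v) / 6) := by
        refine Finset.sum_congr rfl fun π _ => ?_
        rw [hlaw _ (hS π), volume_setOf_displacement_le,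
          ← ENNReal.ofReal_add (jointLength_nonneg ..) (jointLength_nonneg ..),
          ENNReal.ofReal_div_of_pos (by norm_num), ENNReal.ofReal_ofNat,
          ENNReal.div_eq_inv_mul]
        rfl
    _ = ENNReal.ofReal ((∑ π : Perm (Fin 3), jointLength (π i) (π j) u v) / 3) := by
        rw [← ENNReal.ofReal_sum_of_nonneg fun π _ =>
          div_nonneg (add_nonneg (jointLength_nonneg ..) (jointLength_nonneg ..)) (by norm_num)]
        congr 1
        have hshift : ∑ π : Perm (Fin 3), jointLength ((swap 0 1 * π : Perm (Fin 3)) i)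
            ((swap 0 1 * π : Perm (Fin 3)) j) u v =
              ∑ π : Perm (Fin 3), jointLength (π i) (π j) u v :=
          Fintype.sum_equiv (mulLeft (swap 0 1)) _ _ fun _ => rfl
        rw [← Finset.sum_div, Finset.sum_add_distrib, hshift]
        ring

theorem measure_displacement_le (hr : Measurable r)
    (hrlaw : μ.map r = volume.restrict (Ioo 0 1))
    (hσ : ∀ (π : Perm (Fin 3)) (s : Set ℝ), MeasurableSet s →
      μ ({ω | σ ω = π} ∩ r ⁻¹' s) = (6 : ℝ≥0∞)⁻¹ * μ (r ⁻¹' s))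
    (i : Fin 3) (u : ℝ) :
    μ {ω | displacement (σ ω i) (r ω) ≤ u} = ENNReal.ofReal (max 0 (min u 1)) := by
  obtain ⟨j, hji⟩ := exists_ne i
  have hsum := sum_perm_fin_three_apply_pair (fun a (_ : Fin 3) => jointLength a a u u) hji.symm
  have := measure_displacement_le_and_le hr hrlaw hσ i i u u
  simp only [and_self] at this hsum
  rw [this, hsum]
  congr 1
  linarith [sum_jointLength_diag u]

end

/-- Let `r₁` be Uniform(0,1), `r₂ = {r₁ + 1/2}`, `r₃ = 1 − {2 r₁}`, and let `σ` be a
uniformly distributed random permutation of `{1,2,3}` independent of `r₁` (the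
hypothesis `hσ` expresses both uniformity and independence).  Setting `Uᵢ = r_{σ(i)}`,
the variables `{U₁, U₂, U₃}` are pairwise negatively associated, i.e. pairwise
negatively quadrant dependent. -/
theorem permuted_displacement_three_pairwise_NA
    {Ω : Type*} [MeasurableSpace Ω] (μ : Measure Ω) [IsProbabilityMeasure μ]
    (r : Ω → ℝ) (hr : Measurable r)
    (hrlaw : μ.map r = volume.restrict (Set.Ioo (0 : ℝ) 1))
    (σ : Ω → Equiv.Perm (Fin 3))
    (hσ : ∀ (π : Equiv.Perm (Fin 3)) (s : Set ℝ), MeasurableSet s →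
      μ ({ω | σ ω = π} ∩ r ⁻¹' s) = (6 : ENNReal)⁻¹ * μ (r ⁻¹' s)) :
    ∀ i j : Fin 3, i ≠ j → ∀ u v : ℝ,
      μ {ω | (![r ω, Int.fract (r ω + 1 / 2), 1 - Int.fract (2 * r ω)]) (σ ω i) ≤ u ∧
             (![r ω, Int.fract (r ω + 1 / 2), 1 - Int.fract (2 * r ω)]) (σ ω j) ≤ v} ≤
      μ {ω | (![r ω, Int.fract (r ω + 1 / 2), 1 - Int.fract (2 * r ω)]) (σ ω i) ≤ u} *
      μ {ω | (![r ω, Int.fract (r ω + 1 / 2), 1 - Int.fract (2 * r ω)]) (σ ω j) ≤ v} := by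
  intro i j hij u v
  change μ ({ω | displacement (σ ω i) (r ω) ≤ u} ∩ {ω | displacement (σ ω j) (r ω) ≤ v}) ≤
    μ {ω | displacement (σ ω i) (r ω) ≤ u} * μ {ω | displacement (σ ω j) (r ω) ≤ v}
  have hA := measure_displacement_le hr hrlaw hσ i u
  have hB := measure_displacement_le hr hrlaw hσ j v
  by_cases hu : u ∈ Icc 0 1
  swap
  · exact measure_inter_le_mul_of_eq_zero_or_one (hA ▸ ofReal_clamp_eq_zero_or_one hu) _
  by_cases hv : v ∈ Icc 0 1
  swap
  · rw [inter_comm, mul_comm]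
    exact measure_inter_le_mul_of_eq_zero_or_one (hB ▸ ofReal_clamp_eq_zero_or_one hv) _
  calc _ = ENNReal.ofReal ((∑ π : Perm (Fin 3), jointLength (π i) (π j) u v) / 3) :=
        measure_displacement_le_and_le hr hrlaw hσ i j u v
    _ ≤ ENNReal.ofReal (u * v) := by
        rw [sum_perm_fin_three_apply_pair (fun a b => jointLength a b u v) hij]
        exact ENNReal.ofReal_le_ofReal (by linarith [sum_jointLength_offDiag_le hu hv])
    _ = _ := by
        rw [hA, hB, min_eq_left hu.2, max_eq_right hu.1, min_eq_left hv.2, max_eq_right hv.1,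
          ENNReal.ofReal_mul hu.1]
end

section
/- For the iterated Latin hypercube sampling sequence with k ≥ 2 coordinates, for every t ≥ 0 and every pair of distinct indices i ≠ j in {1, …, k}, the correlation satisfies Corr(U_t^{(i)}, U_t^{(j)}) = −(1/(k−1)) · (1 − k^{−2t}). -/
open MeasureTheory ProbabilityTheory

instance {k : ℕ} : MeasurableSpace (Equiv.Perm (Fin k)) := ⊤

/-- The iterated Latin hypercube sampling (ILHS) recursion:
`U₀` has i.i.d. Uniform(0,1) coordinates and
`U_{t+1}⁽ʲ⁾ = (σ_t(j) + U_t⁽ʲ⁾)/k`. -/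
noncomputable def ilhs {Ω : Type*} {k : ℕ} (U0 : Fin k → Ω → ℝ)
    (σ : ℕ → Ω → Equiv.Perm (Fin k)) : ℕ → Fin k → Ω → ℝ
  | 0 => U0
  | t + 1 => fun j ω => (((σ t ω j : ℕ) : ℝ) + ilhs U0 σ t j ω) / k

/-- Value types for the joint family consisting of the initial uniforms and the random
permutations. -/
def ilhsβ (k : ℕ) : Fin k ⊕ ℕ → Type
  | Sum.inl _ => ℝ
  | Sum.inr _ => Equiv.Perm (Fin k)

instance ilhsβMeasurableSpace (k : ℕ) : ∀ x, MeasurableSpace (ilhsβ k x)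
  | Sum.inl _ => (inferInstance : MeasurableSpace ℝ)
  | Sum.inr _ => (inferInstance : MeasurableSpace (Equiv.Perm (Fin k)))

/-- The joint family consisting of the initial uniforms and the random permutations. -/
def ilhsFam {Ω : Type*} {k : ℕ} (U0 : Fin k → Ω → ℝ)
    (σ : ℕ → Ω → Equiv.Perm (Fin k)) : ∀ x : Fin k ⊕ ℕ, Ω → ilhsβ k x
  | Sum.inl j => U0 j
  | Sum.inr t => σ t

/-- The defining hypotheses of the ILHS sequence: the initial coordinates are
Uniform(0,1), each `σ_t` is a uniformly distributed random permutation of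
`{0, …, k−1}`, and all of these are mutually independent. -/
def IsILHS {Ω : Type*} [MeasurableSpace Ω] (μ : Measure Ω) {k : ℕ}
    (U0 : Fin k → Ω → ℝ) (σ : ℕ → Ω → Equiv.Perm (Fin k)) : Prop :=
  (∀ j, Measurable (U0 j)) ∧ (∀ t, Measurable (σ t)) ∧
  (∀ j, μ.map (U0 j) = volume.restrict (Set.Ioo (0 : ℝ) 1)) ∧
  (∀ t (π : Equiv.Perm (Fin k)), μ {ω | σ t ω = π} = ((Nat.factorial k : ENNReal))⁻¹) ∧
  iIndepFun (m := ilhsβMeasurableSpace k) (ilhsFam U0 σ) μ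

/-- Correlation of two real-valued random variables. -/
noncomputable def corr {Ω : Type*} [MeasurableSpace Ω] (μ : Measure Ω) (f g : Ω → ℝ) : ℝ :=
  covar μ f g / (Real.sqrt (covar μ f f) * Real.sqrt (covar μ g g))

/-!
Since `σ_t` is independent of `U_t`, covariances propagate linearly:
`Cov(U_{t+1}⁽ⁱ⁾, U_{t+1}⁽ʲ⁾) = (Cov(σ_t(i), σ_t(j)) + Cov(U_t⁽ⁱ⁾, U_t⁽ʲ⁾)) / k²`.
For a uniform random permutation, `Var σ(i) = (k² - 1)/12`, and `Cov(σ(i), σ(j)) = -(k + 1)/12`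
for `i ≠ j` because `∑ₘ σ(m)` is constant. Hence every `U_t⁽ʲ⁾` keeps variance `1/12`, while the
cross-covariance solves `c_{t+1} = (c_t - (k + 1)/12) / k²` with `c_0 = 0`.
-/

open Finset Nat
open scoped ENNReal

namespace Equiv.Perm

variable {α M R : Type*} [Fintype α] [DecidableEq α]

lemma sum_comp_apply_eq [AddCommMonoid M] (f : α → M) (i i' : α) :
    ∑ π : Perm α, f (π i) = ∑ π : Perm α, f (π i') := by
  simpa [mul_apply] using
    (Equiv.sum_comp (Equiv.mulRight (swap i i')) fun π : Perm α => f (π i)).symm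

lemma card_nsmul_sum_comp_apply [AddCommMonoid M] (f : α → M) (i : α) :
    Fintype.card α • ∑ π : Perm α, f (π i) = (Fintype.card α)! • ∑ a, f a := calc
  Fintype.card α • ∑ π : Perm α, f (π i) = ∑ m, ∑ π : Perm α, f (π m) := by
    simp [sum_comp_apply_eq f _ i]
  _ = ∑ π : Perm α, ∑ a, f a := by
    rw [sum_comm]; exact sum_congr rfl fun π _ => Equiv.sum_comp π f
  _ = (Fintype.card α)! • ∑ a, f a := by simp [Fintype.card_perm]

lemma sum_comp_apply_mul_comp_apply_eq [CommSemiring R] (f : α → R) {i j m : α} (hj : i ≠ j)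
    (hm : i ≠ m) :
    ∑ π : Perm α, f (π i) * f (π m) = ∑ π : Perm α, f (π i) * f (π j) := by
  simpa [mul_apply, swap_apply_of_ne_of_ne hj hm] using
    Equiv.sum_comp (Equiv.mulRight (swap j m)) fun π : Perm α => f (π i) * f (π j)

lemma card_sub_one_mul_sum_comp_apply_mul [CommRing R] (f : α → R) {i j : α} (hij : i ≠ j) :
    ((Fintype.card α : R) - 1) * ∑ π : Perm α, f (π i) * f (π j)
      = (∑ a, f a) * ∑ π : Perm α, f (π i) - ∑ π : Perm α, f (π i) ^ 2 := by
  have hrow (π : Perm α) : f (π i) * ∑ a, f a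
      = f (π i) ^ 2 + ∑ m ∈ univ.erase i, f (π i) * f (π m) := by
    rw [← Equiv.sum_comp π f, mul_sum, ← add_sum_erase _ _ (mem_univ i), sq]
  have hoff : ∑ m ∈ univ.erase i, ∑ π : Perm α, f (π i) * f (π m)
      = ((Fintype.card α : R) - 1) * ∑ π : Perm α, f (π i) * f (π j) := by
    rw [sum_congr rfl fun m hm => sum_comp_apply_mul_comp_apply_eq f hij (ne_of_mem_erase hm).symm,
      sum_const, card_erase_of_mem (mem_univ i), Finset.card_univ, nsmul_eq_mul,
      Nat.cast_sub (Fintype.card_pos_iff.2 ⟨i⟩), Nat.cast_one]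
  rw [← hoff, sum_comm, mul_comm, sum_mul, sum_congr rfl fun π _ => hrow π, sum_add_distrib]
  ring

end Equiv.Perm

section PermSums

open Equiv

variable {k : ℕ}

lemma Fin.sum_univ_val_cast : ∑ a : Fin k, ((a : ℕ) : ℝ) = k * (k - 1) / 2 := by
  rw [Fin.sum_univ_eq_sum_range (fun a => (a : ℝ))]
  induction k with
  | zero => simp
  | succ n ih => rw [sum_range_succ, ih]; push_cast; ring

lemma Fin.sum_univ_val_cast_sq :
    ∑ a : Fin k, ((a : ℕ) : ℝ) ^ 2 = k * (k - 1) * (2 * k - 1) / 6 := by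
  rw [Fin.sum_univ_eq_sum_range (fun a => (a : ℝ) ^ 2)]
  induction k with
  | zero => simp
  | succ n ih => rw [sum_range_succ, ih]; push_cast; ring

lemma Fin.sum_perm_apply_cast (i : Fin k) :
    ∑ π : Perm (Fin k), ((π i : ℕ) : ℝ) = k ! * (k - 1) / 2 := by
  have key := Perm.card_nsmul_sum_comp_apply (fun a : Fin k => ((a : ℕ) : ℝ)) i
  simp only [Fintype.card_fin, nsmul_eq_mul, Fin.sum_univ_val_cast] at key
  have hk : (k : ℝ) ≠ 0 := by have := i.pos; positivity
  apply mul_left_cancel₀ hk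
  linear_combination key

lemma Fin.sum_perm_apply_cast_sq (i : Fin k) :
    ∑ π : Perm (Fin k), ((π i : ℕ) : ℝ) ^ 2 = k ! * ((k - 1) * (2 * k - 1)) / 6 := by
  have key := Perm.card_nsmul_sum_comp_apply (fun a : Fin k => ((a : ℕ) : ℝ) ^ 2) i
  simp only [Fintype.card_fin, nsmul_eq_mul, Fin.sum_univ_val_cast_sq] at key
  have hk : (k : ℝ) ≠ 0 := by have := i.pos; positivity
  apply mul_left_cancel₀ hk
  linear_combination key

lemma Fin.sum_perm_apply_cast_mul {i j : Fin k} (hij : i ≠ j) :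
    ∑ π : Perm (Fin k), ((π i : ℕ) : ℝ) * ((π j : ℕ) : ℝ)
      = k ! * ((k - 2) * (3 * k - 1)) / 12 := by
  have key := Perm.card_sub_one_mul_sum_comp_apply_mul (fun a : Fin k => ((a : ℕ) : ℝ)) hij
  simp only [Fintype.card_fin, Fin.sum_univ_val_cast, Fin.sum_perm_apply_cast,
    Fin.sum_perm_apply_cast_sq] at key
  have hk : (k : ℝ) - 1 ≠ 0 := by
    have : 1 < k := by omega
    rw [sub_ne_zero]; exact_mod_cast this.ne'
  apply mul_left_cancel₀ hk
  linear_combination key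

end PermSums

instance {k : ℕ} : DiscreteMeasurableSpace (Equiv.Perm (Fin k)) := ⟨fun _ => trivial⟩

section UniformPerm

variable {Ω : Type*} [MeasurableSpace Ω] {μ : Measure Ω} {k : ℕ} {τ : Ω → Equiv.Perm (Fin k)}

lemma memLp_comp_of_finite {β : Type*} [MeasurableSpace β] [DiscreteMeasurableSpace β] [Finite β]
    [IsFiniteMeasure μ] {τ : Ω → β} (hτ : Measurable τ) (f : β → ℝ) :
    MemLp (fun ω => f (τ ω)) 2 μ :=
  MemLp.of_discrete.comp_of_map hτ.aemeasurable

lemma integral_comp_perm_of_uniform [IsFiniteMeasure μ] (hτ : Measurable τ)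
    (hunif : ∀ π, μ {ω | τ ω = π} = ((k ! : ℝ≥0∞))⁻¹) (f : Equiv.Perm (Fin k) → ℝ) :
    ∫ ω, f (τ ω) ∂μ = (∑ π, f π) / k ! := by
  have hmap (π : Equiv.Perm (Fin k)) : (μ.map τ).real {π} = (k ! : ℝ)⁻¹ := by
    rw [measureReal_def, Measure.map_apply hτ (measurableSet_singleton π)]
    exact (congrArg ENNReal.toReal (hunif π)).trans (by simp)
  rw [← integral_map hτ.aemeasurable .of_discrete, integral_fintype .of_finite]
  simp [hmap, ← mul_sum, div_eq_inv_mul]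

variable [IsProbabilityMeasure μ]

lemma integral_perm_apply_of_uniform (hτ : Measurable τ)
    (hunif : ∀ π, μ {ω | τ ω = π} = ((k ! : ℝ≥0∞))⁻¹) (i : Fin k) :
    ∫ ω, ((τ ω i : ℕ) : ℝ) ∂μ = (k - 1) / 2 := by
  rw [integral_comp_perm_of_uniform hτ hunif fun π => ((π i : ℕ) : ℝ), Fin.sum_perm_apply_cast]
  field_simp

lemma covariance_perm_apply_self_of_uniform (hτ : Measurable τ)
    (hunif : ∀ π, μ {ω | τ ω = π} = ((k ! : ℝ≥0∞))⁻¹) (i : Fin k) :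
    cov[fun ω => ((τ ω i : ℕ) : ℝ), fun ω => ((τ ω i : ℕ) : ℝ); μ] = (k ^ 2 - 1) / 12 := by
  have hsq : ∫ ω, ((τ ω i : ℕ) : ℝ) * ((τ ω i : ℕ) : ℝ) ∂μ = (k - 1) * (2 * k - 1) / 6 := by
    simp_rw [← sq]
    rw [integral_comp_perm_of_uniform hτ hunif fun π => ((π i : ℕ) : ℝ) ^ 2,
      Fin.sum_perm_apply_cast_sq]
    field_simp
  rw [covariance_eq_sub (memLp_comp_of_finite hτ fun π => ((π i : ℕ) : ℝ))
    (memLp_comp_of_finite hτ fun π => ((π i : ℕ) : ℝ))]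
  simp only [Pi.mul_apply, hsq, integral_perm_apply_of_uniform hτ hunif]
  ring

lemma covariance_perm_apply_of_uniform (hτ : Measurable τ)
    (hunif : ∀ π, μ {ω | τ ω = π} = ((k ! : ℝ≥0∞))⁻¹) {i j : Fin k} (hij : i ≠ j) :
    cov[fun ω => ((τ ω i : ℕ) : ℝ), fun ω => ((τ ω j : ℕ) : ℝ); μ] = -(k + 1) / 12 := by
  have hmul : ∫ ω, ((τ ω i : ℕ) : ℝ) * ((τ ω j : ℕ) : ℝ) ∂μ = (k - 2) * (3 * k - 1) / 12 := by
    rw [integral_comp_perm_of_uniform hτ hunif fun π => ((π i : ℕ) : ℝ) * ((π j : ℕ) : ℝ),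
      Fin.sum_perm_apply_cast_mul hij]
    field_simp
  rw [covariance_eq_sub (memLp_comp_of_finite hτ fun π => ((π i : ℕ) : ℝ))
    (memLp_comp_of_finite hτ fun π => ((π j : ℕ) : ℝ))]
  simp only [Pi.mul_apply, hmul, integral_perm_apply_of_uniform hτ hunif]
  ring

end UniformPerm

section ILHS

variable {Ω : Type*} {k : ℕ} {U0 : Fin k → Ω → ℝ} {σ : ℕ → Ω → Equiv.Perm (Fin k)}

/-- The σ-algebra generated by `U₀` and `σ_s`, `s < t`. -/
abbrev ilhsPast (U0 : Fin k → Ω → ℝ) (σ : ℕ → Ω → Equiv.Perm (Fin k)) (t : ℕ) :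
    MeasurableSpace Ω :=
  ⨆ x ∈ {x : Fin k ⊕ ℕ | Sum.elim (fun _ => True) (· < t) x},
    (ilhsβMeasurableSpace k x).comap (ilhsFam U0 σ x)

lemma ilhsPast_mono : Monotone (ilhsPast U0 σ) := fun _ _ hst =>
  biSup_mono fun
    | .inl _, _ => trivial
    | .inr _, hs => lt_of_lt_of_le hs hst

lemma measurable_ilhsPast_ilhs (t : ℕ) (j : Fin k) :
    Measurable[ilhsPast U0 σ t] (ilhs U0 σ t j) := by
  induction t generalizing j with
  | zero =>
    exact measurable_iff_comap_le.2 (le_iSup₂ (f := fun x _ =>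
      (ilhsβMeasurableSpace k x).comap (ilhsFam U0 σ x)) (Sum.inl j) trivial)
  | succ t ih =>
    have hσ : Measurable[ilhsPast U0 σ (t + 1)] (σ t) :=
      measurable_iff_comap_le.2 (le_iSup₂ (f := fun x _ =>
        (ilhsβMeasurableSpace k x).comap (ilhsFam U0 σ x)) (Sum.inr t) (Nat.lt_succ_self t))
    have hval : Measurable fun π : Equiv.Perm (Fin k) => ((π j : ℕ) : ℝ) := .of_discrete
    show Measurable[ilhsPast U0 σ (t + 1)] fun ω => (((σ t ω j : ℕ) : ℝ) + ilhs U0 σ t j ω) / k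
    exact ((hval.comp hσ).add ((ih j).mono (ilhsPast_mono t.le_succ) le_rfl)).div_const _

variable [MeasurableSpace Ω] {μ : Measure Ω}

lemma measurable_ilhsFam (h : IsILHS μ U0 σ) : ∀ x, Measurable (ilhsFam U0 σ x)
  | .inl j => h.1 j
  | .inr t => h.2.1 t

lemma indepFun_perm_ilhs (h : IsILHS μ U0 σ) (t : ℕ) (j : Fin k) :
    IndepFun (σ t) (ilhs U0 σ t j) μ := by
  have hind := indep_iSup_of_disjoint (fun x => (measurable_ilhsFam h x).comap_le)
    ((iIndepFun_iff_iIndep _ _ _).1 h.2.2.2.2) (S := {Sum.inr t})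
    (T := {x | Sum.elim (fun _ => True) (· < t) x}) (by simp)
  rw [IndepFun_iff_Indep]
  refine indep_of_indep_of_le hind ?_ ?_
  · exact le_iSup₂ (f := fun x (_ : x ∈ ({Sum.inr t} : Set _)) =>
      (ilhsβMeasurableSpace k x).comap (ilhsFam U0 σ x)) (Sum.inr t) rfl
  · exact (measurable_ilhsPast_ilhs t j).comap_le

lemma integral_comp_U0 (h : IsILHS μ U0 σ) (j : Fin k) {f : ℝ → ℝ} (hf : Measurable f) :
    ∫ ω, f (U0 j ω) ∂μ = ∫ x in (0 : ℝ)..1, f x := by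
  rw [← integral_map (h.1 j).aemeasurable hf.aestronglyMeasurable, h.2.2.1 j,
    intervalIntegral.integral_of_le zero_le_one, integral_Ioc_eq_integral_Ioo]

variable [IsProbabilityMeasure μ]

lemma memLp_ilhs (h : IsILHS μ U0 σ) (t : ℕ) (j : Fin k) : MemLp (ilhs U0 σ t j) 2 μ := by
  induction t generalizing j with
  | zero =>
    show MemLp (U0 j) 2 μ
    have hlaw : ∀ᵐ x ∂μ.map (U0 j), x ∈ Set.Ioo (0 : ℝ) 1 := by
      rw [h.2.2.1 j]; exact ae_restrict_mem measurableSet_Ioo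
    refine MemLp.of_bound (h.1 j).aestronglyMeasurable 1 ?_
    filter_upwards [ae_of_ae_map (h.1 j).aemeasurable hlaw] with ω hω
    rw [Real.norm_eq_abs, abs_le]
    exact ⟨by linarith [hω.1], hω.2.le⟩
  | succ t ih =>
    show MemLp (fun ω => (((σ t ω j : ℕ) : ℝ) + ilhs U0 σ t j ω) / k) 2 μ
    simpa only [div_eq_mul_inv, Pi.add_apply] using
      ((memLp_comp_of_finite (h.2.1 t) fun π => ((π j : ℕ) : ℝ)).add (ih j)).mul_const (k : ℝ)⁻¹

lemma covariance_ilhs_succ (h : IsILHS μ U0 σ) (t : ℕ) (i j : Fin k) :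
    cov[ilhs U0 σ (t + 1) i, ilhs U0 σ (t + 1) j; μ]
      = (cov[fun ω => ((σ t ω i : ℕ) : ℝ), fun ω => ((σ t ω j : ℕ) : ℝ); μ]
          + cov[ilhs U0 σ t i, ilhs U0 σ t j; μ]) / k ^ 2 := by
  set A : Fin k → Ω → ℝ := fun i ω => ((σ t ω i : ℕ) : ℝ)
  have hA (i : Fin k) : MemLp (A i) 2 μ := memLp_comp_of_finite (h.2.1 t) fun π => ((π i : ℕ) : ℝ)
  have hX := memLp_ilhs h t
  have hcross (i j : Fin k) : cov[A i, ilhs U0 σ t j; μ] = 0 := by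
    have hval : Measurable fun π : Equiv.Perm (Fin k) => ((π i : ℕ) : ℝ) := .of_discrete
    exact ((indepFun_perm_ilhs h t j).comp hval measurable_id).covariance_eq_zero (hA i) (hX j)
  change cov[fun ω => (A i + ilhs U0 σ t i) ω / k, fun ω => (A j + ilhs U0 σ t j) ω / k; μ] = _
  rw [covariance_fun_div_left, covariance_fun_div_right, covariance_add_left (hA i) (hX i)
    ((hA j).add (hX j)), covariance_add_right (hA i) (hA j) (hX j),
    covariance_add_right (hX i) (hA j) (hX j), hcross, covariance_comm (ilhs U0 σ t i), hcross]
  ring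

lemma covariance_U0_self (h : IsILHS μ U0 σ) (j : Fin k) : cov[U0 j, U0 j; μ] = 1 / 12 := by
  have hU : MemLp (U0 j) 2 μ := memLp_ilhs h 0 j
  rw [covariance_eq_sub hU hU]
  have hmean : ∫ ω, U0 j ω ∂μ = 1 / 2 := by
    rw [integral_comp_U0 h j (f := fun x => x) measurable_id, integral_id]; norm_num
  have hsq : ∫ ω, U0 j ω * U0 j ω ∂μ = 1 / 3 := by
    simp_rw [← sq]
    rw [integral_comp_U0 h j (f := fun x => x ^ 2) (measurable_id.pow_const 2), integral_pow]
    norm_num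
  simp only [Pi.mul_apply, hmean, hsq]
  norm_num

lemma covariance_U0_of_ne (h : IsILHS μ U0 σ) {i j : Fin k} (hij : i ≠ j) :
    cov[U0 i, U0 j; μ] = 0 :=
  (h.2.2.2.2.indepFun (Sum.inl_injective.ne hij)).covariance_eq_zero (memLp_ilhs h 0 i)
    (memLp_ilhs h 0 j)

lemma covariance_ilhs_self (h : IsILHS μ U0 σ) (t : ℕ) (j : Fin k) :
    cov[ilhs U0 σ t j, ilhs U0 σ t j; μ] = 1 / 12 := by
  induction t with
  | zero => exact covariance_U0_self h j
  | succ t ih =>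
    have hk : (k : ℝ) ≠ 0 := by have := j.pos; positivity
    rw [covariance_ilhs_succ h, covariance_perm_apply_self_of_uniform (h.2.1 t) (h.2.2.2.1 t), ih]
    field_simp
    ring

lemma covariance_ilhs_of_ne (h : IsILHS μ U0 σ) {i j : Fin k} (hij : i ≠ j) (t : ℕ) :
    cov[ilhs U0 σ t i, ilhs U0 σ t j; μ]
      = -(1 / ((k : ℝ) - 1)) * (1 - ((k : ℝ) ^ (2 * t))⁻¹) / 12 := by
  have hk : (k : ℝ) - 1 ≠ 0 := by
    have : 1 < k := by omega
    rw [sub_ne_zero]; exact_mod_cast this.ne'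
  induction t with
  | zero =>
    rw [mul_zero, pow_zero, inv_one, sub_self, mul_zero, zero_div]
    exact covariance_U0_of_ne h hij
  | succ t ih =>
    rw [covariance_ilhs_succ h, covariance_perm_apply_of_uniform (h.2.1 t) (h.2.2.2.1 t) hij, ih,
      mul_add, mul_one, pow_add]
    have hk0 : (k : ℝ) ≠ 0 := by have := i.pos; positivity
    field_simp
    ring

end ILHS

lemma covar_eq_covariance {Ω : Type*} [MeasurableSpace Ω] {μ : Measure Ω} [IsProbabilityMeasure μ]
    {X Y : Ω → ℝ} (hX : MemLp X 2 μ) (hY : MemLp Y 2 μ) : covar μ X Y = cov[X, Y; μ] :=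
  (covariance_eq_sub hX hY).symm

theorem ilhs_corr_general {Ω : Type*} [MeasurableSpace Ω] (μ : Measure Ω)
    [IsProbabilityMeasure μ] {k : ℕ}
    (U0 : Fin k → Ω → ℝ) (σ : ℕ → Ω → Equiv.Perm (Fin k)) (h : IsILHS μ U0 σ) :
    ∀ (t : ℕ) (i j : Fin k), i ≠ j →
      corr μ (ilhs U0 σ t i) (ilhs U0 σ t j) =
        -(1 / ((k : ℝ) - 1)) * (1 - ((k : ℝ) ^ (2 * t))⁻¹) := by
  intro t i j hij
  simp only [corr, covar_eq_covariance (memLp_ilhs h t _) (memLp_ilhs h t _),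
    covariance_ilhs_self h, covariance_ilhs_of_ne h hij,
    Real.mul_self_sqrt (by norm_num : (0 : ℝ) ≤ 1 / 12)]
  ring

/-- Pairwise correlations of the ILHS sequence:
`Corr(U_t⁽ⁱ⁾, U_t⁽ʲ⁾) = −(1/(k−1)) (1 − k^{−2t})`. -/
theorem ilhs_corr {Ω : Type*} [MeasurableSpace Ω] (μ : Measure Ω)
    [IsProbabilityMeasure μ] {k : ℕ} (hk : 2 ≤ k)
    (U0 : Fin k → Ω → ℝ) (σ : ℕ → Ω → Equiv.Perm (Fin k)) (h : IsILHS μ U0 σ) :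
    ∀ (t : ℕ) (i j : Fin k), i ≠ j →
      corr μ (ilhs U0 σ t i) (ilhs U0 σ t j) =
        -(1 / ((k : ℝ) - 1)) * (1 - ((k : ℝ) ^ (2 * t))⁻¹) :=
  ilhs_corr_general μ U0 σ h
end

section
/- For the iterated Latin hypercube sampling sequence with k ≥ 2 coordinates, for any finite times t_1, …, t_k ≥ 0, the k-tuple {U_{t_1}^{(1)}, …, U_{t_k}^{(k)}} is a set of negatively associated random variables. -/
open MeasureTheory ProbabilityTheory

/-!
A uniformly random permutation has negatively associated coordinates (Joag-Dev and Proschan):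
conditioning on the position of its largest value leaves a uniform permutation of the remaining
values, and the conditional means of two monotone functions of disjoint coordinate blocks antivary,
so Chebyshev's sum inequality closes an induction on the size. Negative association survives sums
of independent vectors (condition on one summand and use Fubini) and relabelling into disjoint
coordinates, so the vector of all driving noise `U₀⁽ʲ⁾`, `σ_t(j)` is negatively associated. Each
`U_t⁽ʲ⁾` is a nondecreasing function of the noise in column `j`, and distinct columns are disjoint.
Working with bounded test functions throughout, the integrable ones are reached by truncation and
dominated convergence.
-/

open Finset Function Equiv Filter Topology

section Permutation

variable {n : ℕ}

def permVec (π : Perm (Fin n)) : Fin n → ℝ := fun i => (π i : ℕ)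

def insertMax (j : Fin (n + 1)) (τ : Perm (Fin n)) : Perm (Fin (n + 1)) :=
  (finSuccEquiv' j).trans (τ.optionCongr.trans finSuccEquivLast.symm)

@[simp]
lemma insertMax_apply_self (j : Fin (n + 1)) (τ : Perm (Fin n)) :
    insertMax j τ j = Fin.last n := by
  simp [insertMax, finSuccEquivLast]

@[simp]
lemma insertMax_apply_succAbove (j : Fin (n + 1)) (τ : Perm (Fin n)) (m : Fin n) :
    insertMax j τ (j.succAbove m) = (τ m).castSucc := by
  simp [insertMax, finSuccEquivLast]

lemma insertMax_apply_eq_last_iff {j j' : Fin (n + 1)} {τ : Perm (Fin n)} :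
    insertMax j' τ j = Fin.last n ↔ j = j' := by
  rw [← insertMax_apply_self j' τ, (insertMax j' τ).injective.eq_iff]

lemma permVec_insertMax (j : Fin (n + 1)) (τ : Perm (Fin n)) :
    permVec (insertMax j τ) = Fin.insertNth j (n : ℝ) (permVec τ) := by
  funext i
  cases i using Fin.succAboveCases j <;> simp [permVec]

lemma bijective_insertMax :
    Bijective fun p : Fin (n + 1) × Perm (Fin n) => insertMax p.1 p.2 := by
  refine (Fintype.bijective_iff_injective_and_card _).2 ⟨?_, ?_⟩
  · rintro ⟨j, τ⟩ ⟨j', τ'⟩ h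
    obtain rfl : j = j' := insertMax_apply_eq_last_iff.1 <| by
      simpa using (congrArg (· j) h).symm
    refine Prod.ext rfl (Equiv.ext fun m => ?_)
    simpa using congrArg (· (j.succAbove m)) h
  · simp [Fintype.card_perm, Nat.factorial_succ]

lemma sum_perm_eq_sum_insertMax {M : Type*} [AddCommMonoid M] (F : Perm (Fin (n + 1)) → M) :
    ∑ π, F π = ∑ j, ∑ τ, F (insertMax j τ) := by
  rw [← Fintype.sum_prod_type', bijective_insertMax.sum_comp F]

lemma sum_insertMax_eq_sum_ite {M : Type*} [AddCommMonoid M] (j : Fin (n + 1))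
    (F : Perm (Fin (n + 1)) → M) :
    ∑ τ, F (insertMax j τ) = ∑ π, if π j = Fin.last n then F π else 0 := by
  simp [sum_perm_eq_sum_insertMax, insertMax_apply_eq_last_iff]

lemma sum_insertMax_swap {M : Type*} [AddCommMonoid M] (j j' : Fin (n + 1))
    (F : Perm (Fin (n + 1)) → M) :
    ∑ τ, F (insertMax j' τ) = ∑ τ, F (insertMax j τ * swap j j') := by
  rw [sum_insertMax_eq_sum_ite, sum_insertMax_eq_sum_ite j fun π => F (π * swap j j')]
  exact Fintype.sum_equiv (Equiv.mulRight (swap j j')) _ _ fun π => by simp [mul_assoc]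

lemma dependsOn_insertNth {β : Type*} {f : (Fin (n + 1) → ℝ) → β} {J : Set (Fin (n + 1))}
    (hf : DependsOn f J) (j : Fin (n + 1)) (x : ℝ) :
    DependsOn (fun p => f (Fin.insertNth j x p)) (j.succAbove ⁻¹' J) := by
  intro p q hpq
  refine hf fun i hi => ?_
  cases i using Fin.succAboveCases j with
  | x => simp
  | p m => simpa using hpq m hi

lemma monotone_insertNth (j : Fin (n + 1)) (x : ℝ) :
    Monotone fun p : Fin n → ℝ => Fin.insertNth (α := fun _ => ℝ) j x p := by
  intro p q h
  exact Fin.insertNth_le_iff.2 ⟨by simp, by simpa using h⟩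

lemma sum_insertMax_le {f : (Fin (n + 1) → ℝ) → ℝ} {J : Set (Fin (n + 1))} (hf : Monotone f)
    (hdep : DependsOn f J) (j : Fin (n + 1)) {j' : Fin (n + 1)} (hj' : j' ∉ J) :
    ∑ τ, f (permVec (insertMax j' τ)) ≤ ∑ τ, f (permVec (insertMax j τ)) := by
  rw [sum_insertMax_swap j j' fun π => f (permVec π)]
  gcongr with τ
  set v := permVec (insertMax j τ)
  -- Moving the maximal value `n` from `j` to `j' ∉ J` only lowers the coordinates `f` sees.
  calc f (permVec (insertMax j τ * swap j j')) = f (update v j (v j')) := by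
        refine hdep fun i hi => ?_
        obtain rfl | hij := eq_or_ne i j
        · simp [v, permVec]
        · simp [v, permVec, hij, swap_apply_of_ne_of_ne hij (ne_of_mem_of_not_mem hi hj')]
    _ ≤ f v := hf <| update_le_self_iff.2 <| by
        simpa [v, permVec] using Fin.is_le (insertMax j τ j')

lemma antivary_of_forall_le_of_notMem {ι : Type*} {S₁ S₂ : ι → ℝ} {J₁ J₂ : Set ι}
    (hJ : Disjoint J₁ J₂) (h₁ : ∀ j j', j' ∉ J₁ → S₁ j' ≤ S₁ j)
    (h₂ : ∀ j j', j' ∉ J₂ → S₂ j' ≤ S₂ j) : Antivary S₁ S₂ := by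
  intro i j hij
  have hj : j ∈ J₂ := by
    by_contra hj
    exact (h₂ i j hj).not_gt hij
  exact h₁ i j (Set.disjoint_right.1 hJ hj)

/-- Negative association of the coordinates of a uniformly random permutation (Joag-Dev and
Proschan), in counting form. -/
theorem factorial_mul_sum_mul_le_sum_mul_sum {f₁ f₂ : (Fin n → ℝ) → ℝ} {J₁ J₂ : Set (Fin n)}
    (hJ : Disjoint J₁ J₂) (hf₁ : Monotone f₁) (hf₂ : Monotone f₂) (hd₁ : DependsOn f₁ J₁)
    (hd₂ : DependsOn f₂ J₂) :
    (n.factorial : ℝ) * ∑ π, f₁ (permVec π) * f₂ (permVec π) ≤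
      (∑ π, f₁ (permVec π)) * ∑ π, f₂ (permVec π) := by
  induction n with
  | zero => simp
  | succ n ih =>
    set S₁ := fun j => ∑ τ, f₁ (permVec (insertMax j τ))
    set S₂ := fun j => ∑ τ, f₂ (permVec (insertMax j τ))
    have hcond (j : Fin (n + 1)) :
        (n.factorial : ℝ) * ∑ τ, f₁ (permVec (insertMax j τ)) * f₂ (permVec (insertMax j τ)) ≤
          S₁ j * S₂ j := by
      simp only [S₁, S₂, permVec_insertMax]
      exact ih (hJ.preimage _) (hf₁.comp (monotone_insertNth j _))
        (hf₂.comp (monotone_insertNth j _)) (dependsOn_insertNth hd₁ j _)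
        (dependsOn_insertNth hd₂ j _)
    have hanti : Antivary S₁ S₂ := antivary_of_forall_le_of_notMem hJ
      (fun j _ hj' => sum_insertMax_le hf₁ hd₁ j hj')
      (fun j _ hj' => sum_insertMax_le hf₂ hd₂ j hj')
    calc ((n + 1).factorial : ℝ) * ∑ π, f₁ (permVec π) * f₂ (permVec π)
        = (n + 1 : ℕ) * ∑ j, (n.factorial : ℝ) *
            ∑ τ, f₁ (permVec (insertMax j τ)) * f₂ (permVec (insertMax j τ)) := by
          rw [sum_perm_eq_sum_insertMax, ← mul_sum, Nat.factorial_succ]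
          push_cast
          ring
      _ ≤ (n + 1 : ℕ) * ∑ j, S₁ j * S₂ j :=
          mul_le_mul_of_nonneg_left (sum_le_sum fun j _ => hcond j) (by positivity)
      _ ≤ (∑ j, S₁ j) * ∑ j, S₂ j := by simpa using hanti.card_mul_sum_le_sum_mul_sum
      _ = (∑ π, f₁ (permVec π)) * ∑ π, f₂ (permVec π) := by
          rw [sum_perm_eq_sum_insertMax, sum_perm_eq_sum_insertMax]

instance {n : ℕ} : DiscreteMeasurableSpace (Perm (Fin n)) :=
  ⟨fun _ => MeasurableSpace.measurableSet_top⟩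

section Covariance

variable {Ω : Type*} [MeasurableSpace Ω] {μ : Measure Ω}

lemma covar_const_left [IsProbabilityMeasure μ] (c : ℝ) (g : Ω → ℝ) :
    covar μ (fun _ => c) g = 0 := by
  simp [covar, integral_const_mul]

lemma covar_const_right [IsProbabilityMeasure μ] (c : ℝ) (g : Ω → ℝ) :
    covar μ g (fun _ => c) = 0 := by
  simp [covar, integral_mul_const]

lemma covar_map_s11 {E : Type*} [MeasurableSpace E] {φ : Ω → E} (hφ : Measurable φ) {g h : E → ℝ}
    (hg : Measurable g) (hh : Measurable h) :
    covar (μ.map φ) g h = covar μ (fun ω => g (φ ω)) (fun ω => h (φ ω)) := by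
  simp only [covar]
  rw [integral_map (f := fun x => g x * h x) hφ.aemeasurable (hg.mul hh).aestronglyMeasurable,
    integral_map hφ.aemeasurable hg.aestronglyMeasurable,
    integral_map hφ.aemeasurable hh.aestronglyMeasurable]

lemma covar_prod_le_zero {E F : Type*} [MeasurableSpace E] [MeasurableSpace F] {ρ : Measure E}
    {ν : Measure F} [IsFiniteMeasure ρ] [IsFiniteMeasure ν] {g₁ g₂ : E × F → ℝ}
    (hg₁ : Measurable g₁) (hg₂ : Measurable g₂) {C₁ C₂ : ℝ} (hC₁ : ∀ p, ‖g₁ p‖ ≤ C₁)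
    (hC₂ : ∀ p, ‖g₂ p‖ ≤ C₂)
    (h_fiber : ∀ x, covar ν (fun y => g₁ (x, y)) (fun y => g₂ (x, y)) ≤ 0)
    (h_mean : covar ρ (fun x => ∫ y, g₁ (x, y) ∂ν) (fun x => ∫ y, g₂ (x, y) ∂ν) ≤ 0) :
    covar (ρ.prod ν) g₁ g₂ ≤ 0 := by
  have hC₁₂ (p : E × F) : ‖g₁ p * g₂ p‖ ≤ C₁ * C₂ := by
    rw [norm_mul]
    exact mul_le_mul (hC₁ p) (hC₂ p) (norm_nonneg _) ((norm_nonneg _).trans (hC₁ p))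
  have hi₁ : Integrable g₁ (ρ.prod ν) := .of_bound hg₁.aestronglyMeasurable _ (ae_of_all _ hC₁)
  have hi₂ : Integrable g₂ (ρ.prod ν) := .of_bound hg₂.aestronglyMeasurable _ (ae_of_all _ hC₂)
  have hi₁₂ : Integrable (fun p => g₁ p * g₂ p) (ρ.prod ν) :=
    .of_bound (hg₁.mul hg₂).aestronglyMeasurable _ (ae_of_all _ hC₁₂)
  have hbound {g : E × F → ℝ} {C : ℝ} (hC : ∀ p, ‖g p‖ ≤ C) (x : E) :
      ‖∫ y, g (x, y) ∂ν‖ ≤ C * ν.real Set.univ :=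
    norm_integral_le_of_norm_le_const (ae_of_all _ fun y => hC (x, y))
  have hi_mean : Integrable (fun x => (∫ y, g₁ (x, y) ∂ν) * ∫ y, g₂ (x, y) ∂ν) ρ := by
    refine .of_bound (hi₁.integral_prod_left.aestronglyMeasurable.mul
      hi₂.integral_prod_left.aestronglyMeasurable) (C₁ * ν.real Set.univ * (C₂ * ν.real Set.univ))
      (ae_of_all _ fun x => ?_)
    rw [norm_mul]
    exact mul_le_mul (hbound hC₁ x) (hbound hC₂ x) (norm_nonneg _)
      ((norm_nonneg _).trans (hbound hC₁ x))
  simp only [covar, sub_nonpos] at h_fiber h_mean ⊢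
  rw [integral_prod _ hi₁₂, integral_prod _ hi₁, integral_prod _ hi₂]
  exact (integral_mono hi₁₂.integral_prod_left hi_mean h_fiber).trans h_mean

def truncate (N : ℕ) (x : ℝ) : ℝ := max (-N) (min N x)

lemma monotone_truncate (N : ℕ) : Monotone (truncate N) :=
  fun _ _ h => max_le_max le_rfl (min_le_min le_rfl h)

lemma continuous_truncate (N : ℕ) : Continuous (truncate N) := by
  unfold truncate
  fun_prop

lemma norm_truncate_le_natCast (N : ℕ) (x : ℝ) : ‖truncate N x‖ ≤ N := by
  rw [Real.norm_eq_abs, abs_le]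
  exact ⟨le_max_left _ _, max_le (by simp) (min_le_left _ _)⟩

lemma norm_truncate_le (N : ℕ) (x : ℝ) : ‖truncate N x‖ ≤ ‖x‖ := by
  simp only [truncate, Real.norm_eq_abs, abs_le]
  constructor
  · exact le_max_of_le_right (le_min (by linarith [abs_nonneg x]) (neg_abs_le x))
  · exact max_le (by linarith [abs_nonneg x, N.cast_nonneg (α := ℝ)])
      ((min_le_right _ _).trans (le_abs_self x))

lemma tendsto_truncate (x : ℝ) : Tendsto (fun N : ℕ => truncate N x) atTop (𝓝 x) := by
  refine tendsto_atTop_of_eventually_const (i₀ := ⌈|x|⌉₊) fun N hN => ?_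
  have hx : |x| ≤ N := Nat.ceil_le.1 hN
  rw [truncate, min_eq_right ((le_abs_self x).trans hx),
    max_eq_right (neg_le.1 ((neg_le_abs x).trans hx))]

lemma covar_le_zero_of_truncate {g₁ g₂ : Ω → ℝ} (hg₁ : Integrable g₁ μ) (hg₂ : Integrable g₂ μ)
    (hg₁₂ : Integrable (fun ω => g₁ ω * g₂ ω) μ)
    (h : ∀ N : ℕ, covar μ (fun ω => truncate N (g₁ ω)) (fun ω => truncate N (g₂ ω)) ≤ 0) :
    covar μ g₁ g₂ ≤ 0 := by
  have hlim {F : ℕ → Ω → ℝ} {g : Ω → ℝ} (hg : Integrable g μ)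
      (hF : ∀ N, AEStronglyMeasurable (F N) μ) (hle : ∀ N ω, ‖F N ω‖ ≤ ‖g ω‖)
      (hFg : ∀ ω, Tendsto (F · ω) atTop (𝓝 (g ω))) :
      Tendsto (fun N => ∫ ω, F N ω ∂μ) atTop (𝓝 (∫ ω, g ω ∂μ)) :=
    tendsto_integral_of_dominated_convergence _ hF hg.norm (fun N => ae_of_all _ (hle N))
      (ae_of_all _ hFg)
  have hmeas {g : Ω → ℝ} (hg : Integrable g μ) (N : ℕ) :
      AEStronglyMeasurable (fun ω => truncate N (g ω)) μ :=
    (continuous_truncate N).comp_aestronglyMeasurable hg.aestronglyMeasurable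
  have hlim₁₂ := hlim hg₁₂ (fun N => (hmeas hg₁ N).mul (hmeas hg₂ N))
    (fun N ω => by
      simpa only [Pi.mul_apply, norm_mul] using
        mul_le_mul (norm_truncate_le N _) (norm_truncate_le N _) (norm_nonneg _) (norm_nonneg _))
    fun ω => (tendsto_truncate _).mul (tendsto_truncate _)
  have hlim₁ := hlim hg₁ (hmeas hg₁) (fun N ω => norm_truncate_le N _) fun ω => tendsto_truncate _
  have hlim₂ := hlim hg₂ (hmeas hg₂) (fun N ω => norm_truncate_le N _) fun ω => tendsto_truncate _
  exact le_of_tendsto' (hlim₁₂.sub (hlim₁.mul hlim₂)) h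

end Covariance

section NegativeAssociation

variable {Ω ι κ : Type*} [MeasurableSpace Ω] {μ : Measure Ω}

structure IsTestFun (J : Set ι) (f : (ι → ℝ) → ℝ) : Prop where
  monotone : Monotone f
  measurable : Measurable f
  dependsOn : DependsOn f J
  bounded : ∃ C, ∀ x, ‖f x‖ ≤ C

/-- Negative association of the random vector `X`, tested against bounded test functions only;
the blocks `J₁`, `J₂` may be infinite. -/
def BddNegAssoc (μ : Measure Ω) (X : Ω → ι → ℝ) : Prop :=
  ∀ ⦃J₁ J₂ : Set ι⦄, Disjoint J₁ J₂ → ∀ ⦃f₁ f₂ : (ι → ℝ) → ℝ⦄, IsTestFun J₁ f₁ → IsTestFun J₂ f₂ →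
    covar μ (fun ω => f₁ (X ω)) (fun ω => f₂ (X ω)) ≤ 0

namespace IsTestFun

variable {J : Set ι} {f : (ι → ℝ) → ℝ}

lemma comp (hf : IsTestFun J f) {Φ : (κ → ℝ) → ι → ℝ} {J' : Set κ} (hΦ : Monotone Φ)
    (hΦm : Measurable Φ) (hdep : ∀ i ∈ J, DependsOn (fun x => Φ x i) J') :
    IsTestFun J' fun x => f (Φ x) where
  monotone := hf.monotone.comp hΦ
  measurable := hf.measurable.comp hΦm
  dependsOn _ _ hxy := hf.dependsOn fun i hi => hdep i hi hxy
  bounded := let ⟨C, hC⟩ := hf.bounded; ⟨C, fun _ => hC _⟩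

lemma comp_add_left (hf : IsTestFun J f) (x : ι → ℝ) : IsTestFun J fun y => f (x + y) :=
  hf.comp (fun _ _ h => add_le_add_right h x) (measurable_const_add x)
    fun i hi _ _ hyz => by simp only [Pi.add_apply, hyz i hi]

lemma integral_comp_add (hf : IsTestFun J f) (ρ : Measure (ι → ℝ)) [IsFiniteMeasure ρ] :
    IsTestFun J fun x => ∫ y, f (x + y) ∂ρ := by
  obtain ⟨C, hC⟩ := hf.bounded
  have hint (x : ι → ℝ) : Integrable (fun y => f (x + y)) ρ :=
    .of_bound (hf.comp_add_left x).measurable.aestronglyMeasurable C (ae_of_all _ fun _ => hC _)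
  refine ⟨fun x x' h => integral_mono (hint x) (hint x') fun y => hf.monotone ?_, ?_,
    fun x x' h => integral_congr_ae (ae_of_all _ fun y => hf.dependsOn ?_),
    ⟨C * ρ.real Set.univ, fun x => norm_integral_le_of_norm_le_const (ae_of_all _ fun _ => hC _)⟩⟩
  · exact add_le_add_left h y
  · exact (hf.measurable.comp measurable_add).stronglyMeasurable.integral_prod_right'.measurable
  · intro i hi
    simp only [Pi.add_apply, h i hi]

end IsTestFun

lemma isTestFun_truncate_comp {A : Finset ι} {f : (A → ℝ) → ℝ} (hf : Monotone f)
    (hfm : Measurable f) (N : ℕ) : IsTestFun (A : Set ι) fun x => truncate N (f fun i => x i) where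
  monotone := (monotone_truncate N).comp (hf.comp fun _ _ h i => h i)
  measurable := (continuous_truncate N).measurable.comp
    (hfm.comp (measurable_pi_lambda _ fun _ => measurable_pi_apply _))
  dependsOn _ _ hxy := congrArg (truncate N ∘ f) (funext fun i => hxy i i.2)
  bounded := ⟨N, fun _ => norm_truncate_le_natCast N _⟩

lemma bddNegAssoc_map_iff {E : Type*} [MeasurableSpace E] {φ : Ω → E} (hφ : Measurable φ)
    {X : E → ι → ℝ} (hX : Measurable X) :
    BddNegAssoc (μ.map φ) X ↔ BddNegAssoc μ (fun ω => X (φ ω)) := by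
  refine forall₂_congr fun J₁ J₂ => forall_congr' fun _ => forall₂_congr fun f₁ f₂ =>
    forall₂_congr fun hf₁ hf₂ => ?_
  rw [covar_map_s11 hφ (g := fun x => f₁ (X x)) (h := fun x => f₂ (X x)) (hf₁.measurable.comp hX)
    (hf₂.measurable.comp hX)]

lemma bddNegAssoc_const [IsProbabilityMeasure μ] (x : ι → ℝ) : BddNegAssoc μ fun _ => x :=
  fun _ _ _ f₁ _ _ _ => (covar_const_left (f₁ x) _).le

lemma bddNegAssoc_piSingle [IsProbabilityMeasure μ] [DecidableEq ι] (i₀ : ι) (X : Ω → ℝ) :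
    BddNegAssoc μ fun ω => Pi.single i₀ (X ω) := by
  intro J₁ J₂ hJ f₁ f₂ hf₁ hf₂
  have hconst {J : Set ι} {f : (ι → ℝ) → ℝ} (hf : IsTestFun J f) (hi₀ : i₀ ∉ J) (x : ℝ) :
      f (Pi.single i₀ x) = f 0 :=
    hf.dependsOn fun i hi => by simp [ne_of_mem_of_not_mem hi hi₀]
  by_cases hi₀ : i₀ ∈ J₁
  · simp only [hconst hf₂ (Set.disjoint_left.1 hJ hi₀), covar_const_right, le_refl]
  · simp only [hconst hf₁ hi₀, covar_const_left, le_refl]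

lemma bddNegAssoc_permVec [IsFiniteMeasure μ] {n : ℕ} {σ : Ω → Perm (Fin n)} (hσ : Measurable σ)
    (hlaw : ∀ π, μ {ω | σ ω = π} = (n.factorial : ENNReal)⁻¹) :
    BddNegAssoc μ fun ω => permVec (σ ω) := by
  have hint (g : Perm (Fin n) → ℝ) :
      ∫ ω, g (σ ω) ∂μ = (n.factorial : ℝ)⁻¹ * ∑ π, g π := by
    rw [← integral_map hσ.aemeasurable Measurable.of_discrete.aestronglyMeasurable,
      integral_fintype .of_finite, mul_sum]
    refine sum_congr rfl fun π _ => ?_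
    rw [measureReal_def, Measure.map_apply hσ (measurableSet_singleton π)]
    simp [Set.preimage, hlaw]
  intro J₁ J₂ hJ f₁ f₂ hf₁ hf₂
  have key := factorial_mul_sum_mul_le_sum_mul_sum hJ hf₁.monotone hf₂.monotone hf₁.dependsOn
    hf₂.dependsOn
  rw [← sub_nonpos] at key
  simp only [covar]
  rw [hint fun π => f₁ (permVec π) * f₂ (permVec π), hint fun π => f₁ (permVec π),
    hint fun π => f₂ (permVec π)]
  calc _ = ((n.factorial : ℝ)⁻¹) ^ 2 * ((n.factorial : ℝ) * ∑ π, f₁ (permVec π) * f₂ (permVec π) -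
        (∑ π, f₁ (permVec π)) * ∑ π, f₂ (permVec π)) := by
        field_simp
    _ ≤ 0 := mul_nonpos_of_nonneg_of_nonpos (by positivity) key

namespace BddNegAssoc

lemma prod_add {ρ ν : Measure (ι → ℝ)} [IsFiniteMeasure ρ] [IsFiniteMeasure ν]
    (hρ : BddNegAssoc ρ id) (hν : BddNegAssoc ν id) :
    BddNegAssoc (ρ.prod ν) fun p => p.1 + p.2 := by
  intro J₁ J₂ hJ f₁ f₂ hf₁ hf₂
  obtain ⟨C₁, hC₁⟩ := hf₁.bounded
  obtain ⟨C₂, hC₂⟩ := hf₂.bounded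
  exact covar_prod_le_zero (hf₁.measurable.comp measurable_add)
    (hf₂.measurable.comp measurable_add) (fun _ => hC₁ _) (fun _ => hC₂ _)
    (fun x => hν hJ (hf₁.comp_add_left x) (hf₂.comp_add_left x))
    (hρ hJ (hf₁.integral_comp_add ν) (hf₂.integral_comp_add ν))

lemma add [IsFiniteMeasure μ] {X Y : Ω → ι → ℝ} (hX : BddNegAssoc μ X) (hY : BddNegAssoc μ Y)
    (hXm : Measurable X) (hYm : Measurable Y) (hXY : IndepFun X Y μ) :
    BddNegAssoc μ (X + Y) := by
  have hlaw := (indepFun_iff_map_prod_eq_prod_map_map hXm.aemeasurable hYm.aemeasurable).1 hXY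
  have hpair : BddNegAssoc (μ.map fun ω => (X ω, Y ω)) fun p => p.1 + p.2 := by
    rw [hlaw]
    exact ((bddNegAssoc_map_iff hXm measurable_id).2 hX).prod_add
      ((bddNegAssoc_map_iff hYm measurable_id).2 hY)
  exact (bddNegAssoc_map_iff (hXm.prodMk hYm) measurable_add).1 hpair

lemma finsetSum [IsProbabilityMeasure μ] {X : κ → Ω → ι → ℝ} (hX : ∀ c, BddNegAssoc μ (X c))
    (hXm : ∀ c, Measurable (X c)) (hind : iIndepFun X μ) (s : Finset κ) :
    BddNegAssoc μ (∑ c ∈ s, X c) := by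
  classical
  induction s using Finset.induction_on with
  | empty => exact bddNegAssoc_const 0
  | insert c s hc ih =>
    rw [sum_insert hc]
    refine (hX c).add ih (hXm c) ?_ (hind.indepFun_finsetSum_of_notMem hXm hc).symm
    exact Finset.sum_induction _ Measurable (fun _ _ => .add) measurable_zero fun c _ => hXm c

lemma extend {X : Ω → κ → ℝ} (hX : BddNegAssoc μ X) {e : κ → ι} (he : Injective e) :
    BddNegAssoc μ fun ω => Function.extend e (X ω) 0 := by
  have hcases (i : ι) : (∃ a, e a = i ∧ ∀ x : κ → ℝ, Function.extend e x 0 i = x a) ∨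
      ∀ x : κ → ℝ, Function.extend e x 0 i = 0 := by
    by_cases h : ∃ a, e a = i
    · obtain ⟨a, rfl⟩ := h
      exact .inl ⟨a, rfl, fun x => he.extend_apply x 0 a⟩
    · exact .inr fun x => Function.extend_apply' x (0 : ι → ℝ) i h
  have hmono : Monotone fun x : κ → ℝ => Function.extend e x 0 := fun x y hxy i => by
    rcases hcases i with ⟨a, -, ha⟩ | h0
    · simpa only [ha] using hxy a
    · simp only [h0, le_refl]
  have hmeas : Measurable fun x : κ → ℝ => Function.extend e x 0 :=
    measurable_pi_lambda _ fun i => by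
      rcases hcases i with ⟨a, -, ha⟩ | h0
      · simpa only [ha] using measurable_pi_apply a
      · simpa only [h0] using measurable_const
  have hdep (J : Set ι) :
      ∀ i ∈ J, DependsOn (fun x : κ → ℝ => Function.extend e x 0 i) (e ⁻¹' J) := by
    intro i hi x y hxy
    rcases hcases i with ⟨a, rfl, ha⟩ | h0
    · simp only [ha]
      exact hxy a hi
    · simp only [h0]
  intro J₁ J₂ hJ f₁ f₂ hf₁ hf₂
  exact hX (hJ.preimage e) (hf₁.comp hmono hmeas (hdep J₁)) (hf₂.comp hmono hmeas (hdep J₂))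

lemma comp_monotone {X : Ω → ι → ℝ} (hX : BddNegAssoc μ X) (col : ι → κ)
    {φ : κ → (ι → ℝ) → ℝ} (hmono : ∀ j, Monotone (φ j)) (hmeas : ∀ j, Measurable (φ j))
    (hdep : ∀ j, DependsOn (φ j) (col ⁻¹' {j})) :
    BddNegAssoc μ fun ω j => φ j (X ω) := by
  have hΦ : Monotone fun y j => φ j y := fun _ _ h j => hmono j h
  have hdep' (J : Set κ) : ∀ j ∈ J, DependsOn (fun y => φ j y) (col ⁻¹' J) := fun j hj =>
    (hdep j).mono (Set.preimage_mono (Set.singleton_subset_iff.2 hj))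
  intro J₁ J₂ hJ f₁ f₂ hf₁ hf₂
  exact hX (hJ.preimage col) (hf₁.comp hΦ (measurable_pi_lambda _ hmeas) (hdep' J₁))
    (hf₂.comp hΦ (measurable_pi_lambda _ hmeas) (hdep' J₂))

lemma negAssoc {n : ℕ} {X : Fin n → Ω → ℝ} (hX : BddNegAssoc μ fun ω j => X j ω) :
    NegAssoc μ X := by
  intro A₁ A₂ hA f₁ f₂ hf₁ hf₂ hm₁ hm₂ hi₁ hi₂ hi₁₂
  exact covar_le_zero_of_truncate hi₁ hi₂ hi₁₂ fun N => hX (Finset.disjoint_coe.2 hA)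
    (isTestFun_truncate_comp hf₁ hm₁ N) (isTestFun_truncate_comp hf₂ hm₂ N)

end BddNegAssoc

end NegativeAssociation

section ILHS

/-- Coordinates of the driving noise: `inl j` carries `U₀⁽ʲ⁾` and `inr (t, j)` carries `σ_t(j)`. -/
abbrev ILHSIndex (k : ℕ) := Fin k ⊕ (ℕ × Fin k)

noncomputable def ilhsCoord (k : ℕ) : (c : Fin k ⊕ ℕ) → ilhsβ k c → ILHSIndex k → ℝ
  | Sum.inl j => fun x => Pi.single (Sum.inl j) x
  | Sum.inr t => fun π => Function.extend (fun j => Sum.inr (t, j)) (permVec π) 0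

lemma measurable_ilhsCoord (k : ℕ) : ∀ c, Measurable (ilhsCoord k c)
  | Sum.inl _ => measurable_update 0
  | Sum.inr _ => Measurable.of_discrete (α := Perm (Fin k))

lemma extend_inr_apply {k : ℕ} (v : Fin k → ℝ) (s t : ℕ) (j : Fin k) :
    Function.extend (fun j => (Sum.inr (s, j) : ILHSIndex k)) v 0 (Sum.inr (t, j)) =
      if s = t then v j else 0 := by
  split_ifs with h
  · subst h
    exact Injective.extend_apply (f := fun j => (Sum.inr (s, j) : ILHSIndex k))
      (fun _ _ h => by simpa using h) v 0 j
  · exact extend_apply' v (0 : ILHSIndex k → ℝ) _ fun ⟨a, ha⟩ => h (by simp_all)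

variable {Ω : Type*} {k : ℕ} {U0 : Fin k → Ω → ℝ} {σ : ℕ → Ω → Perm (Fin k)}

variable (U0 σ) in
/-- The pieces `ilhsCoord k c` have disjoint supports, so the sum just places them side by side. -/
noncomputable def ilhsVec (T : ℕ) : Ω → ILHSIndex k → ℝ :=
  ∑ c ∈ univ.disjSum (range T), ilhsCoord k c ∘ ilhsFam U0 σ c

lemma ilhsVec_inl (T : ℕ) (ω : Ω) (j : Fin k) : ilhsVec U0 σ T ω (Sum.inl j) = U0 j ω := by
  simp [ilhsVec, ilhsCoord, ilhsFam, Pi.single_apply]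

lemma ilhsVec_inr {T t : ℕ} (ht : t < T) (ω : Ω) (j : Fin k) :
    ilhsVec U0 σ T ω (Sum.inr (t, j)) = σ t ω j := by
  simp [ilhsVec, ilhsCoord, ilhsFam, extend_inr_apply, permVec, ht]

lemma bddNegAssoc_ilhsVec [MeasurableSpace Ω] {μ : Measure Ω} [IsProbabilityMeasure μ]
    (h : IsILHS μ U0 σ) (T : ℕ) : BddNegAssoc μ (ilhsVec U0 σ T) := by
  obtain ⟨hU, hσ, -, hσlaw, hind⟩ := h
  have hmeas : ∀ c, Measurable (ilhsFam U0 σ c)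
    | Sum.inl j => hU j
    | Sum.inr t => hσ t
  refine BddNegAssoc.finsetSum (fun c => ?_) (fun c => (measurable_ilhsCoord k c).comp (hmeas c))
    (hind.comp _ (measurable_ilhsCoord k)) _
  rcases c with j | t
  · exact bddNegAssoc_piSingle _ (U0 j)
  · exact (bddNegAssoc_permVec (hσ t) (hσlaw t)).extend fun _ _ h => by simpa using h

def ILHSIndex.column : ILHSIndex k → Fin k := Sum.elim id Prod.snd

variable (k) in
noncomputable def ilhsOfCoords (j : Fin k) : ℕ → (ILHSIndex k → ℝ) → ℝ
  | 0, y => y (Sum.inl j)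
  | t + 1, y => (y (Sum.inr (t, j)) + ilhsOfCoords j t y) / k

lemma monotone_ilhsOfCoords (j : Fin k) : ∀ t, Monotone (ilhsOfCoords k j t)
  | 0 => fun _ _ h => h _
  | t + 1 => fun _ _ h => div_le_div_of_nonneg_right
      (add_le_add (h _) (monotone_ilhsOfCoords j t h)) k.cast_nonneg

lemma measurable_ilhsOfCoords (j : Fin k) : ∀ t, Measurable (ilhsOfCoords k j t)
  | 0 => measurable_pi_apply _
  | t + 1 => ((measurable_pi_apply _).add (measurable_ilhsOfCoords j t)).div_const _

lemma dependsOn_ilhsOfCoords (j : Fin k) :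
    ∀ t, DependsOn (ilhsOfCoords k j t) (ILHSIndex.column ⁻¹' {j})
  | 0 => fun _ _ h => h _ rfl
  | t + 1 => fun _ _ h => by
      simp only [ilhsOfCoords, h (Sum.inr (t, j)) rfl, dependsOn_ilhsOfCoords j t h]

lemma ilhs_eq_ilhsOfCoords {T : ℕ} (ω : Ω) (j : Fin k) :
    ∀ {t}, t ≤ T → ilhs U0 σ t j ω = ilhsOfCoords k j t (ilhsVec U0 σ T ω)
  | 0, _ => (ilhsVec_inl T ω j).symm
  | t + 1, ht => by
      simp only [ilhs, ilhsOfCoords, ilhsVec_inr ht, ilhs_eq_ilhsOfCoords ω j (by omega : t ≤ T)]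

end ILHS

theorem ilhs_negAssoc_general {Ω : Type*} [MeasurableSpace Ω] (μ : Measure Ω)
    [IsProbabilityMeasure μ] {k : ℕ}
    (U0 : Fin k → Ω → ℝ) (σ : ℕ → Ω → Equiv.Perm (Fin k)) (h : IsILHS μ U0 σ) :
    ∀ tv : Fin k → ℕ, NegAssoc μ (fun j ω => ilhs U0 σ (tv j) j ω) := by
  intro tv
  have hrepr : (fun ω j => ilhs U0 σ (tv j) j ω) =
      fun ω j => ilhsOfCoords k j (tv j) (ilhsVec U0 σ (univ.sup tv) ω) := by
    funext ω j
    exact ilhs_eq_ilhsOfCoords ω j (le_sup (mem_univ j))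
  refine BddNegAssoc.negAssoc ?_
  rw [hrepr]
  exact (bddNegAssoc_ilhsVec h _).comp_monotone ILHSIndex.column
    (fun j => monotone_ilhsOfCoords j _) (fun j => measurable_ilhsOfCoords j _)
    (fun j => dependsOn_ilhsOfCoords j _)

/-- For any finite times `t₁, …, t_k`, the tuple `{U_{t₁}⁽¹⁾, …, U_{t_k}⁽ᵏ⁾}` of ILHS
variates is negatively associated. -/
theorem ilhs_negAssoc {Ω : Type*} [MeasurableSpace Ω] (μ : Measure Ω)
    [IsProbabilityMeasure μ] {k : ℕ} (hk : 2 ≤ k)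
    (U0 : Fin k → Ω → ℝ) (σ : ℕ → Ω → Equiv.Perm (Fin k)) (h : IsILHS μ U0 σ) :
    ∀ tv : Fin k → ℕ, NegAssoc μ (fun j ω => ilhs U0 σ (tv j) j ω) :=
  ilhs_negAssoc_general μ U0 σ h
end Permutation
end

section
/- For the iterated Latin hypercube sampling sequence with k ≥ 2 coordinates, let h_1, h_2 : [0,1] → ℝ be nondecreasing functions, and for each time s ≥ 0 let F_s^{(h_1,h_2)}(u,v) = P(h_1(U_s^{(1)}) ≤ u, h_2(U_s^{(2)}) ≤ v) be the joint CDF of (h_1(U_s^{(1)}), h_2(U_s^{(2)})). Then for all integers t ≥ 0 and m ≥ 1, the Kolmogorov–Smirnov distance satisfies sup_{(u,v) ∈ ℝ²} |F_{t+m}^{(h_1,h_2)}(u,v) − F_t^{(h_1,h_2)}(u,v)| ≤ k^{−(t−1)} (k−1)^{−(t+2)}. -/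
open MeasureTheory ProbabilityTheory

/-!
Let `G_s` be the joint CDF of `(U_s^{(i)}, U_s^{(j)})`. Conditioning on `σ_s` gives
`G_{s+1}(a, b) = 𝔼_π G_s(k a - π i, k b - π j)`, and `(π i, π j)` is uniform on the `k (k - 1)`
off-diagonal pairs. Every coordinate stays Uniform(0,1), so `G_s - G_t` vanishes off the open
unit square, and for fixed `(a, b)` at most one pair puts `(k a - π i, k b - π j)` inside it:
the step contracts sup-distances by `1 / (k (k - 1))`. Since `G_0(a, b) = a b` and one step moves
the product by at most `1 / (k - 1)`, `sup |G_m - G_0| ≤ k / (k - 1)²` for every `m`, and `t`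
further steps contribute the factor `(k (k - 1))^{-t}`. Nondecreasing `h₁, h₂` only turn `u, v`
into thresholds, because the coordinates have atomless laws.
-/

open Finset Equiv MeasureTheory ProbabilityTheory
open scoped Nat ENNReal

lemma MonotoneOn.exists_le_iff_le_of_ne {g : ℝ → ℝ} (hg : MonotoneOn g (Set.Icc 0 1)) (u : ℝ) :
    ∃ c, ∀ x ∈ Set.Ioo (0 : ℝ) 1, x ≠ c → (g x ≤ u ↔ x ≤ c) := by
  set S := insert 0 {y ∈ Set.Ioo (0 : ℝ) 1 | g y ≤ u}
  have hS : BddAbove S := ⟨1, Set.forall_mem_insert.2 ⟨zero_le_one, fun y hy => hy.1.2.le⟩⟩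
  refine ⟨sSup S, fun x hx hxc => ⟨fun hgx => le_csSup hS (Set.mem_insert_of_mem _ ⟨hx, hgx⟩),
    fun hxS => ?_⟩⟩
  obtain ⟨y, hyS, hxy⟩ := exists_lt_of_lt_csSup (Set.insert_nonempty _ _) (hxS.lt_of_ne hxc)
  rcases hyS with rfl | ⟨hy, hgy⟩
  · exact absurd hxy (not_lt.2 hx.1.le)
  · exact (hg (Set.Ioo_subset_Icc_self hx) (Set.Ioo_subset_Icc_self hy) hxy.le).trans hgy

namespace ILHS

lemma eq_of_sub_natCast_mem_Ioo {c : ℝ} {m n : ℕ} (hm : c - m ∈ Set.Ioo 0 1)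
    (hn : c - n ∈ Set.Ioo 0 1) : m = n := by
  have h₁ : (m : ℝ) < n + 1 := by linarith [hm.1, hn.2]
  have h₂ : (n : ℝ) < m + 1 := by linarith [hm.2, hn.1]
  have h₁' : m < n + 1 := by exact_mod_cast h₁
  have h₂' : n < m + 1 := by exact_mod_cast h₂
  omega

lemma natCast_add_div_le_iff {k n : ℕ} (hk : 0 < k) {x a : ℝ} :
    ((n : ℝ) + x) / k ≤ a ↔ x ≤ k * a - n := by
  rw [div_le_iff₀ (by exact_mod_cast hk)]
  constructor <;> intro <;> linarith

lemma two_le_of_ne {k : ℕ} {i j : Fin k} (hij : i ≠ j) : 2 ≤ k := by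
  have := Fintype.one_lt_card_iff.2 ⟨i, j, hij⟩
  rw [Fintype.card_fin] at this
  exact this

section UniformCDF

noncomputable def uniformCDF (x : ℝ) : ℝ := max 0 (min x 1)

lemma uniformCDF_nonneg (x : ℝ) : 0 ≤ uniformCDF x := le_max_left _ _

lemma uniformCDF_le_one (x : ℝ) : uniformCDF x ≤ 1 := max_le zero_le_one (min_le_right _ _)

lemma uniformCDF_of_nonpos {x : ℝ} (hx : x ≤ 0) : uniformCDF x = 0 :=
  max_eq_left (min_le_of_left_le hx)

lemma uniformCDF_of_one_le {x : ℝ} (hx : 1 ≤ x) : uniformCDF x = 1 := by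
  simp [uniformCDF, min_eq_right hx]

lemma volume_restrict_Ioo_Iic (a : ℝ) :
    volume.restrict (Set.Ioo (0 : ℝ) 1) (Set.Iic a) = ENNReal.ofReal (uniformCDF a) := by
  have hIoc : (Set.Ioo 0 1 ∩ Set.Iic a : Set ℝ) =ᵐ[volume] (Set.Ioc 0 1 ∩ Set.Iic a : Set ℝ) :=
    Ioo_ae_eq_Ioc.inter (ae_eq_refl _)
  rw [Measure.restrict_apply measurableSet_Iic, Set.inter_comm, measure_congr hIoc,
    Set.Ioc_inter_Iic, Real.volume_Ioc, sub_zero, uniformCDF, min_comm]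
  rcases le_total 0 (min a 1) with ha | ha
  · rw [max_eq_right ha]
  · rw [ENNReal.ofReal_of_nonpos ha, max_eq_left ha, ENNReal.ofReal_zero]

lemma sum_uniformCDF_sub_natCast (n : ℕ) (c : ℝ) :
    ∑ i : Fin n, uniformCDF (c - i) = max 0 (min c n) := by
  induction n with
  | zero => simp
  | succ n ih =>
    rw [Fin.sum_univ_castSucc]
    simp only [Fin.val_castSucc, Fin.val_last]
    rw [ih, uniformCDF]
    push_cast
    rcases le_total c n with hc | hc
    · rw [max_eq_left (min_le_of_left_le (by linarith : c - n ≤ 0)), min_eq_left hc,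
        min_eq_left (by linarith)]
      ring
    · rw [min_eq_right hc, max_eq_right (Nat.cast_nonneg n),
        max_eq_right (le_min (by linarith) zero_le_one), ← min_add_add_left, add_sub_cancel,
        max_eq_right (le_min (by linarith) (by positivity))]

lemma sum_uniformCDF_mul_sub (k : ℕ) (a : ℝ) :
    ∑ i : Fin k, uniformCDF (k * a - i) = k * uniformCDF a := by
  rw [sum_uniformCDF_sub_natCast, uniformCDF, mul_max_of_nonneg _ _ (Nat.cast_nonneg k),
    mul_min_of_nonneg _ _ (Nat.cast_nonneg k), mul_zero, mul_one]

end UniformCDF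

section PermSum

variable {α : Type*} [DecidableEq α]

lemma sum_offDiag_mul {R : Type*} [Fintype α] [CommRing R] (f g : α → R) :
    ∑ p ∈ univ.offDiag, f p.1 * g p.2 = (∑ i, f i) * (∑ i, g i) - ∑ i, f i * g i := by
  rw [eq_sub_iff_add_eq, sum_mul_sum, ← sum_product', ← diag_union_offDiag,
    sum_union (disjoint_diag_offDiag _), sum_diag, add_comm]

variable {a b : α}

lemma exists_perm_apply_eq_pair (hab : a ≠ b) {p q : α} (hpq : p ≠ q) :
    ∃ τ : Perm α, τ a = p ∧ τ b = q := by
  have hb : swap a p b ≠ p := by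
    rw [Ne, swap_apply_eq_iff, swap_apply_right]
    exact hab.symm
  exact ⟨swap (swap a p b) q * swap a p, by simp [swap_apply_of_ne_of_ne hb.symm hpq], by simp⟩

variable [Fintype α]

lemma card_filter_perm_apply_pair (hab : a ≠ b) {p : α × α} (hp : p.1 ≠ p.2) :
    #{π : Perm α | (π a, π b) = p} = #{π : Perm α | (π a, π b) = (a, b)} := by
  obtain ⟨τ, hτa, hτb⟩ := exists_perm_apply_eq_pair hab hp
  refine card_nbij' (τ⁻¹ * ·) (τ * ·) ?_ ?_ ?_ ?_ <;> intro π
  · simp only [coe_filter, mem_univ, true_and, Set.mem_ofPred_eq, Prod.ext_iff, Perm.mul_apply]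
    rintro ⟨ha, hb⟩
    simp [ha, hb, ← hτa, ← hτb]
  · simp [Prod.ext_iff, ← hτa, ← hτb]
  · simp
  · simp

lemma sum_perm_apply_pair {M : Type*} [AddCommMonoid M] (hab : a ≠ b) (F : α → α → M) :
    ∑ π : Perm α, F (π a) (π b) =
      #{π : Perm α | (π a, π b) = (a, b)} • ∑ p ∈ univ.offDiag, F p.1 p.2 := by
  rw [← sum_fiberwise_of_maps_to (g := fun π : Perm α => (π a, π b)) (t := univ.offDiag)
    (fun π _ => ?_), smul_sum]
  · refine sum_congr rfl fun p hp => ?_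
    rw [← card_filter_perm_apply_pair hab (mem_offDiag.1 hp).2.2, ← sum_const]
    exact sum_congr rfl fun π hπ => by rw [← (mem_filter.1 hπ).2]
  · simp [hab, π.injective.ne]

lemma inv_factorial_mul_sum_perm_apply_pair (hab : a ≠ b) (F : α → α → ℝ) :
    ((Fintype.card α)! : ℝ)⁻¹ * ∑ π : Perm α, F (π a) (π b) =
      ((Fintype.card α : ℝ) * (Fintype.card α - 1))⁻¹ * ∑ p ∈ univ.offDiag, F p.1 p.2 := by
  have hcount := sum_perm_apply_pair hab fun _ _ => (1 : ℕ)
  simp only [sum_const, Finset.card_univ, Fintype.card_perm, smul_eq_mul, mul_one,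
    offDiag_card] at hcount
  have hc : (#{π : Perm α | (π a, π b) = (a, b)} : ℝ) ≠ 0 :=
    Nat.cast_ne_zero.2 (card_ne_zero.2 ⟨1, by simp⟩)
  rw [sum_perm_apply_pair hab, nsmul_eq_mul, hcount, ← mul_assoc]
  congr 1
  push_cast [Nat.cast_sub (Nat.le_mul_self _)]
  rw [mul_inv, mul_comm, ← mul_assoc, mul_inv_cancel₀ hc, one_mul, mul_sub_one]

end PermSum

section CDFStep

noncomputable def cdfStep (k : ℕ) (i j : Fin k) (H : ℝ → ℝ → ℝ) (a b : ℝ) : ℝ :=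
  (k ! : ℝ)⁻¹ * ∑ π : Perm (Fin k), H (k * a - π i) (k * b - π j)

variable {k : ℕ} {i j : Fin k}

lemma cdfStep_eq_offDiag (hij : i ≠ j) (H : ℝ → ℝ → ℝ) (a b : ℝ) :
    cdfStep k i j H a b = ((k : ℝ) * (k - 1))⁻¹ *
      ∑ p ∈ (univ : Finset (Fin k)).offDiag, H (k * a - (p.1 : ℕ)) (k * b - (p.2 : ℕ)) := by
  have := inv_factorial_mul_sum_perm_apply_pair hij fun p q : Fin k => H (k * a - p) (k * b - q)
  rwa [Fintype.card_fin] at this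

lemma abs_cdfStep_sub_cdfStep_le (hij : i ≠ j) {H₁ H₂ : ℝ → ℝ → ℝ} {ε : ℝ}
    (hsupp : ∀ x y, H₁ x y ≠ H₂ x y → x ∈ Set.Ioo 0 1 ∧ y ∈ Set.Ioo 0 1)
    (hε : ∀ x y, |H₁ x y - H₂ x y| ≤ ε) (a b : ℝ) :
    |cdfStep k i j H₁ a b - cdfStep k i j H₂ a b| ≤ ((k : ℝ) * (k - 1))⁻¹ * ε := by
  have hk : (2 : ℝ) ≤ k := by exact_mod_cast two_le_of_ne hij
  set D : Fin k × Fin k → ℝ := fun p =>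
    H₁ (k * a - p.1) (k * b - p.2) - H₂ (k * a - p.1) (k * b - p.2)
  set P : Fin k × Fin k → Prop := fun p =>
    k * a - p.1 ∈ Set.Ioo (0 : ℝ) 1 ∧ k * b - p.2 ∈ Set.Ioo (0 : ℝ) 1
  have hD : ∀ p ∈ univ.offDiag, |D p| ≠ 0 → P p := fun p _ hp =>
    hsupp _ _ (sub_ne_zero.1 (abs_ne_zero.1 hp))
  have hP : #{p ∈ univ.offDiag | P p} ≤ 1 := card_le_one.2 fun p hp q hq => by
    simp only [mem_filter, P] at hp hq
    exact Prod.ext (Fin.ext (eq_of_sub_natCast_mem_Ioo hp.2.1 hq.2.1))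
      (Fin.ext (eq_of_sub_natCast_mem_Ioo hp.2.2 hq.2.2))
  have hinv : 0 ≤ ((k : ℝ) * (k - 1))⁻¹ := inv_nonneg.2 (by nlinarith)
  rw [cdfStep_eq_offDiag hij, cdfStep_eq_offDiag hij, ← mul_sub, ← sum_sub_distrib, abs_mul,
    abs_of_nonneg hinv]
  refine mul_le_mul_of_nonneg_left ?_ hinv
  calc |∑ p ∈ univ.offDiag, D p| ≤ ∑ p ∈ univ.offDiag, |D p| := abs_sum_le_sum_abs _ _
    _ = ∑ p ∈ univ.offDiag with P p, |D p| := (sum_filter_of_ne hD).symm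
    _ ≤ #{p ∈ univ.offDiag | P p} • ε := sum_le_card_nsmul _ _ _ fun p _ => hε _ _
    _ ≤ ε := by
      rw [nsmul_eq_mul]
      exact mul_le_of_le_one_left ((abs_nonneg _).trans (hε 0 0)) (by exact_mod_cast hP)

lemma cdfStep_uniformCDF_left (hij : i ≠ j) (a b : ℝ) :
    cdfStep k i j (fun x _ => uniformCDF x) a b = uniformCDF a := by
  have hk : (2 : ℝ) ≤ k := by exact_mod_cast two_le_of_ne hij
  have hk₀ : (k : ℝ) ≠ 0 := by positivity
  have hk₁ : (k : ℝ) - 1 ≠ 0 := by linarith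
  have hsum := sum_offDiag_mul (fun i : Fin k => uniformCDF (k * a - i)) 1
  simp only [Pi.one_apply, mul_one, sum_const, card_univ, Fintype.card_fin, nsmul_eq_mul,
    sum_uniformCDF_mul_sub] at hsum
  rw [cdfStep_eq_offDiag hij, hsum]
  field_simp

lemma abs_cdfStep_mul_sub_mul_le (hij : i ≠ j) (a b : ℝ) :
    |cdfStep k i j (fun x y => uniformCDF x * uniformCDF y) a b - uniformCDF a * uniformCDF b|
      ≤ ((k : ℝ) - 1)⁻¹ := by
  have hk : (2 : ℝ) ≤ k := by exact_mod_cast two_le_of_ne hij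
  have hk₁ : (k : ℝ) - 1 ≠ 0 := by linarith
  set S := ∑ i : Fin k, uniformCDF (k * a - i) * uniformCDF (k * b - i)
  have hS₀ : 0 ≤ S := sum_nonneg fun i _ => mul_nonneg (uniformCDF_nonneg _) (uniformCDF_nonneg _)
  have hS₁ : S ≤ k := by
    simpa using sum_le_card_nsmul (univ : Finset (Fin k)) _ (1 : ℝ) fun i _ =>
      mul_le_one₀ (uniformCDF_le_one _) (uniformCDF_nonneg _) (uniformCDF_le_one _)
  have hP₀ := mul_nonneg (uniformCDF_nonneg a) (uniformCDF_nonneg b)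
  have hP₁ := mul_le_one₀ (uniformCDF_le_one a) (uniformCDF_nonneg b) (uniformCDF_le_one b)
  have key : cdfStep k i j (fun x y => uniformCDF x * uniformCDF y) a b -
      uniformCDF a * uniformCDF b = (k * (uniformCDF a * uniformCDF b) - S) / (k * (k - 1)) := by
    rw [cdfStep_eq_offDiag hij, sum_offDiag_mul (fun i : Fin k => uniformCDF (k * a - i))
      (fun i : Fin k => uniformCDF (k * b - i)), sum_uniformCDF_mul_sub, sum_uniformCDF_mul_sub]
    field_simp
    ring
  have hkk : (0 : ℝ) < k * (k - 1) := by nlinarith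
  have hk_div : ((k : ℝ) - 1)⁻¹ * (k * (k - 1)) = k := by field_simp
  rw [key, abs_div, abs_of_pos hkk, div_le_iff₀ hkk, hk_div, abs_le]
  constructor <;> nlinarith

end CDFStep

section Sequence

variable {Ω : Type*} {k : ℕ} {U0 : Fin k → Ω → ℝ} {σ : ℕ → Ω → Perm (Fin k)}

abbrev inputSigma (U0 : Fin k → Ω → ℝ) (σ : ℕ → Ω → Perm (Fin k)) (x : Fin k ⊕ ℕ) :
    MeasurableSpace Ω :=
  (ilhsβMeasurableSpace k x).comap (ilhsFam U0 σ x)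

lemma measurable_ilhs_of_past (s : ℕ) (j : Fin k) :
    Measurable[⨆ x ∈ Set.range Sum.inl ∪ Sum.inr '' Set.Iio s, inputSigma U0 σ x]
      (ilhs U0 σ s j) := by
  induction s with
  | zero =>
    exact (comap_measurable (U0 j)).mono
      (le_iSup₂ (f := fun x _ => inputSigma U0 σ x) (Sum.inl j) (by simp)) le_rfl
  | succ s ih =>
    have hσ : Measurable[⨆ x ∈ Set.range Sum.inl ∪ Sum.inr '' Set.Iio (s + 1),
        inputSigma U0 σ x] (σ s) :=
      (comap_measurable (σ s)).mono
        (le_iSup₂ (f := fun x _ => inputSigma U0 σ x) (Sum.inr s) (by simp)) le_rfl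
    refine (((measurable_from_top (f := fun π : Perm (Fin k) => ((π j : ℕ) : ℝ))).comp hσ).add
      (ih.mono ?_ le_rfl)).div_const _
    refine iSup₂_mono' fun x hx => ⟨x, ?_, le_rfl⟩
    rcases hx with hx | ⟨r, hr, rfl⟩
    · exact Or.inl hx
    · exact Or.inr ⟨r, Nat.lt_succ_of_lt hr, rfl⟩

variable [MeasurableSpace Ω] {μ : Measure Ω} {i j : Fin k}

lemma inputSigma_le (h : IsILHS μ U0 σ) (x : Fin k ⊕ ℕ) : inputSigma U0 σ x ≤ ‹MeasurableSpace Ω› :=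
  match x with
  | Sum.inl j => (h.1 j).comap_le
  | Sum.inr t => (h.2.1 t).comap_le

lemma measurable_ilhs (h : IsILHS μ U0 σ) (s : ℕ) (j : Fin k) : Measurable (ilhs U0 σ s j) :=
  (measurable_ilhs_of_past s j).mono (iSup₂_le fun x _ => inputSigma_le h x) le_rfl

lemma indepFun_perm_ilhs (h : IsILHS μ U0 σ) (s : ℕ) :
    IndepFun (σ s) (fun ω j => ilhs U0 σ s j ω) μ := by
  have hindep := indep_iSup_of_disjoint (inputSigma_le h)
    ((iIndepFun_iff_iIndep _ _ _).1 h.2.2.2.2) (S := {Sum.inr s})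
    (T := Set.range Sum.inl ∪ Sum.inr '' Set.Iio s) (by simp)
  rw [IndepFun_iff_Indep]
  exact indep_of_indep_of_le hindep
    (le_iSup₂ (f := fun x _ => inputSigma U0 σ x) (Sum.inr s) rfl)
    (@measurable_pi_lambda _ _ _ (_) _ _ fun j => measurable_ilhs_of_past s j).comap_le

lemma measure_ilhs_succ_preimage (h : IsILHS μ U0 σ) (s : ℕ) {B : Set (Fin k → ℝ)}
    (hB : MeasurableSet B) :
    μ ((fun ω j => ilhs U0 σ (s + 1) j ω) ⁻¹' B) = ∑ π : Perm (Fin k), (k ! : ℝ≥0∞)⁻¹ *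
      μ ((fun ω j => ilhs U0 σ s j ω) ⁻¹' {x | (fun j => ((π j : ℕ) + x j) / k) ∈ B}) := by
  have hshift (π : Perm (Fin k)) :
      MeasurableSet {x : Fin k → ℝ | (fun j => ((π j : ℕ) + x j) / k) ∈ B} :=
    measurable_pi_lambda _ (fun j => (measurable_const.add (measurable_pi_apply j)).div_const _) hB
  have hfiber (π : Perm (Fin k)) : MeasurableSet (σ s ⁻¹' {π}) :=
    h.2.1 s MeasurableSpace.measurableSet_top
  rw [← Measure.restrict_apply_univ, ← Set.preimage_univ (f := σ s), ← coe_univ,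
    ← sum_measure_preimage_singleton _ fun π _ => hfiber π]
  refine sum_congr rfl fun π _ => ?_
  rw [Measure.restrict_apply (hfiber π), ← h.2.2.2.1 s π]
  change _ = μ (σ s ⁻¹' {π}) * _
  rw [← (indepFun_perm_ilhs h s).measure_inter_preimage_eq_mul _ _
    MeasurableSpace.measurableSet_top (hshift π)]
  congr 1
  ext ω
  simp only [Set.mem_inter_iff, Set.mem_preimage, Set.mem_singleton_iff, Set.mem_ofPred_eq]
  constructor <;> rintro ⟨rfl, hω⟩ <;> exact ⟨rfl, hω⟩

lemma measure_ilhs_succ_le (h : IsILHS μ U0 σ) (s : ℕ) (i j : Fin k) (a b : ℝ) :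
    μ {ω | ilhs U0 σ (s + 1) i ω ≤ a ∧ ilhs U0 σ (s + 1) j ω ≤ b} =
      ∑ π : Perm (Fin k), (k ! : ℝ≥0∞)⁻¹ *
        μ {ω | ilhs U0 σ s i ω ≤ k * a - π i ∧ ilhs U0 σ s j ω ≤ k * b - π j} := by
  have hB : MeasurableSet {x : Fin k → ℝ | x i ≤ a ∧ x j ≤ b} :=
    (measurableSet_le (measurable_pi_apply i) measurable_const).inter
      (measurableSet_le (measurable_pi_apply j) measurable_const)
  simpa only [Set.preimage_ofPred_eq, Set.mem_ofPred_eq, natCast_add_div_le_iff i.pos]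
    using measure_ilhs_succ_preimage h s hB

lemma map_ilhs (h : IsILHS μ U0 σ) (hk : 2 ≤ k) (s : ℕ) (j : Fin k) :
    μ.map (ilhs U0 σ s j) = volume.restrict (Set.Ioo 0 1) := by
  induction s generalizing j with
  | zero => exact h.2.2.1 j
  | succ s ih =>
    obtain ⟨j', hj'⟩ := Fintype.exists_ne_of_one_lt_card (by rw [Fintype.card_fin]; omega) j
    refine (Measure.ext_of_Iic _ _ fun a => ?_).symm
    have hcdf (s : ℕ) (a : ℝ) :
        μ {ω | ilhs U0 σ s j ω ≤ a} = μ.map (ilhs U0 σ s j) (Set.Iic a) :=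
      (Measure.map_apply (measurable_ilhs h s j) measurableSet_Iic).symm
    have hstep := measure_ilhs_succ_le h s j j a a
    simp only [and_self] at hstep
    simp_rw [← hcdf, volume_restrict_Ioo_Iic, hstep, hcdf, ih, volume_restrict_Ioo_Iic]
    rw [← cdfStep_uniformCDF_left hj'.symm a 0, cdfStep, ENNReal.ofReal_mul (by positivity),
      ENNReal.ofReal_sum_of_nonneg (fun _ _ => uniformCDF_nonneg _), mul_sum,
      ENNReal.ofReal_inv_of_pos (by positivity), ENNReal.ofReal_natCast]

lemma ae_ilhs_mem_Ioo (h : IsILHS μ U0 σ) (hk : 2 ≤ k) (s : ℕ) (j : Fin k) :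
    ∀ᵐ ω ∂μ, ilhs U0 σ s j ω ∈ Set.Ioo 0 1 := by
  refine ae_of_ae_map (measurable_ilhs h s j).aemeasurable ?_
  rw [map_ilhs h hk s j]
  exact ae_restrict_mem measurableSet_Ioo

lemma ae_ilhs_ne (h : IsILHS μ U0 σ) (hk : 2 ≤ k) (s : ℕ) (j : Fin k) (c : ℝ) :
    ∀ᵐ ω ∂μ, ilhs U0 σ s j ω ≠ c := by
  refine ae_of_ae_map (p := (· ≠ c)) (measurable_ilhs h s j).aemeasurable ?_
  rw [map_ilhs h hk s j]
  exact ae_restrict_of_ae (Measure.ae_ne volume c)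

lemma measure_ilhs_le (h : IsILHS μ U0 σ) (hk : 2 ≤ k) (s : ℕ) (j : Fin k) (a : ℝ) :
    μ {ω | ilhs U0 σ s j ω ≤ a} = ENNReal.ofReal (uniformCDF a) := by
  rw [← volume_restrict_Ioo_Iic, ← map_ilhs h hk s j,
    Measure.map_apply (measurable_ilhs h s j) measurableSet_Iic]
  rfl

lemma exists_measure_monotoneOn_le_eq (h : IsILHS μ U0 σ) (hk : 2 ≤ k) (i j : Fin k)
    {g₁ g₂ : ℝ → ℝ} (hg₁ : MonotoneOn g₁ (Set.Icc 0 1)) (hg₂ : MonotoneOn g₂ (Set.Icc 0 1))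
    (u v : ℝ) : ∃ c₁ c₂ : ℝ, ∀ s,
      μ {ω | g₁ (ilhs U0 σ s i ω) ≤ u ∧ g₂ (ilhs U0 σ s j ω) ≤ v} =
        μ {ω | ilhs U0 σ s i ω ≤ c₁ ∧ ilhs U0 σ s j ω ≤ c₂} := by
  obtain ⟨c₁, hc₁⟩ := hg₁.exists_le_iff_le_of_ne u
  obtain ⟨c₂, hc₂⟩ := hg₂.exists_le_iff_le_of_ne v
  refine ⟨c₁, c₂, fun s => measure_congr ?_⟩
  filter_upwards [ae_ilhs_mem_Ioo h hk s i, ae_ilhs_mem_Ioo h hk s j, ae_ilhs_ne h hk s i c₁,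
    ae_ilhs_ne h hk s j c₂] with ω hi hj hi' hj'
  exact propext (and_congr (hc₁ _ hi hi') (hc₂ _ hj hj'))

noncomputable def ilhsCDF (μ : Measure Ω) (U0 : Fin k → Ω → ℝ) (σ : ℕ → Ω → Perm (Fin k))
    (i j : Fin k) (s : ℕ) (a b : ℝ) : ℝ :=
  (μ {ω | ilhs U0 σ s i ω ≤ a ∧ ilhs U0 σ s j ω ≤ b}).toReal

lemma ilhsCDF_comm (s : ℕ) (a b : ℝ) :
    ilhsCDF μ U0 σ i j s a b = ilhsCDF μ U0 σ j i s b a := by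
  simp only [ilhsCDF, and_comm]

lemma ilhsCDF_zero (h : IsILHS μ U0 σ) (hij : i ≠ j) (a b : ℝ) :
    ilhsCDF μ U0 σ i j 0 a b = uniformCDF a * uniformCDF b := by
  have hU (j : Fin k) (a : ℝ) : μ (U0 j ⁻¹' Set.Iic a) = ENNReal.ofReal (uniformCDF a) := by
    rw [← Measure.map_apply (h.1 j) measurableSet_Iic, h.2.2.1 j, volume_restrict_Ioo_Iic]
  have hind : IndepFun (U0 i) (U0 j) μ :=
    h.2.2.2.2.indepFun (i := Sum.inl i) (j := Sum.inl j) (by simpa using hij)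
  change (μ (U0 i ⁻¹' Set.Iic a ∩ U0 j ⁻¹' Set.Iic b)).toReal = _
  rw [hind.measure_inter_preimage_eq_mul _ _ measurableSet_Iic measurableSet_Iic, hU, hU,
    ENNReal.toReal_mul, ENNReal.toReal_ofReal (uniformCDF_nonneg _),
    ENNReal.toReal_ofReal (uniformCDF_nonneg _)]

lemma ilhsCDF_succ [IsFiniteMeasure μ] (h : IsILHS μ U0 σ) (s : ℕ) :
    ilhsCDF μ U0 σ i j (s + 1) = cdfStep k i j (ilhsCDF μ U0 σ i j s) := by
  ext a b
  rw [ilhsCDF, measure_ilhs_succ_le h, ENNReal.toReal_sum fun π _ =>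
    ENNReal.mul_ne_top (by simp [Nat.factorial_ne_zero]) (measure_ne_top _ _), cdfStep, mul_sum]
  refine sum_congr rfl fun π _ => ?_
  rw [ENNReal.toReal_mul, ENNReal.toReal_inv, ENNReal.toReal_natCast]
  rfl

lemma ilhsCDF_of_not_mem_left (h : IsILHS μ U0 σ) (hk : 2 ≤ k) (s : ℕ) {a : ℝ}
    (ha : a ∉ Set.Ioo 0 1) (b : ℝ) :
    ilhsCDF μ U0 σ i j s a b = uniformCDF a * uniformCDF b := by
  rcases le_or_gt a 0 with ha₀ | ha₀
  · rw [uniformCDF_of_nonpos ha₀, zero_mul, ilhsCDF, ENNReal.toReal_eq_zero_iff]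
    refine Or.inl (measure_mono_null (t := {ω | ilhs U0 σ s i ω ≤ a}) (fun ω hω => hω.1) ?_)
    rw [measure_ilhs_le h hk, uniformCDF_of_nonpos ha₀, ENNReal.ofReal_zero]
  · have ha₁ : 1 ≤ a := not_lt.1 fun ha₁ => ha ⟨ha₀, ha₁⟩
    rw [uniformCDF_of_one_le ha₁, one_mul, ilhsCDF,
      ← ENNReal.toReal_ofReal (uniformCDF_nonneg b), ← measure_ilhs_le h hk s j b]
    congr 1
    refine measure_congr ?_
    filter_upwards [ae_ilhs_mem_Ioo h hk s i] with ω hω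
    exact propext ⟨And.right, fun hY => ⟨hω.2.le.trans ha₁, hY⟩⟩

lemma mem_Ioo_of_ilhsCDF_ne (h : IsILHS μ U0 σ) (hk : 2 ≤ k) {s t : ℕ} {a b : ℝ}
    (hne : ilhsCDF μ U0 σ i j s a b ≠ ilhsCDF μ U0 σ i j t a b) :
    a ∈ Set.Ioo 0 1 ∧ b ∈ Set.Ioo 0 1 := by
  have hboundary (s : ℕ) (hab : ¬(a ∈ Set.Ioo 0 1 ∧ b ∈ Set.Ioo 0 1)) :
      ilhsCDF μ U0 σ i j s a b = uniformCDF a * uniformCDF b := by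
    rcases not_and_or.1 hab with ha | hb
    · exact ilhsCDF_of_not_mem_left h hk s ha b
    · rw [ilhsCDF_comm, mul_comm]
      exact ilhsCDF_of_not_mem_left h hk s hb a
  by_contra hab
  exact hne ((hboundary s hab).trans (hboundary t hab).symm)

variable [IsFiniteMeasure μ]

lemma abs_ilhsCDF_sub_ilhsCDF_zero_le (h : IsILHS μ U0 σ) (hij : i ≠ j) (m : ℕ) (a b : ℝ) :
    |ilhsCDF μ U0 σ i j m a b - ilhsCDF μ U0 σ i j 0 a b| ≤ k / ((k : ℝ) - 1) ^ 2 := by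
  have hk := two_le_of_ne hij
  have hk₁ : (1 : ℝ) ≤ k - 1 := by
    have : (2 : ℝ) ≤ k := by exact_mod_cast hk
    linarith
  induction m generalizing a b with
  | zero =>
    rw [sub_self, abs_zero]
    positivity
  | succ m ih =>
    have hG₀ : ilhsCDF μ U0 σ i j 0 = fun x y => uniformCDF x * uniformCDF y :=
      funext₂ (ilhsCDF_zero h hij)
    calc |ilhsCDF μ U0 σ i j (m + 1) a b - ilhsCDF μ U0 σ i j 0 a b|
        ≤ |cdfStep k i j (ilhsCDF μ U0 σ i j m) a b - cdfStep k i j (ilhsCDF μ U0 σ i j 0) a b|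
          + |cdfStep k i j (ilhsCDF μ U0 σ i j 0) a b - ilhsCDF μ U0 σ i j 0 a b| := by
          rw [ilhsCDF_succ h]
          exact abs_sub_le _ _ _
      _ ≤ ((k : ℝ) * (k - 1))⁻¹ * (k / ((k : ℝ) - 1) ^ 2) + ((k : ℝ) - 1)⁻¹ := by
          refine add_le_add (abs_cdfStep_sub_cdfStep_le hij
            (fun x y => mem_Ioo_of_ilhsCDF_ne h hk) ih a b) ?_
          rw [hG₀]
          exact abs_cdfStep_mul_sub_mul_le hij a b
      _ ≤ k / ((k : ℝ) - 1) ^ 2 := by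
          field_simp
          nlinarith

lemma abs_ilhsCDF_add_sub_le (h : IsILHS μ U0 σ) (hij : i ≠ j) (t m : ℕ) (a b : ℝ) :
    |ilhsCDF μ U0 σ i j (t + m) a b - ilhsCDF μ U0 σ i j t a b| ≤
      k / ((k : ℝ) - 1) ^ 2 * ((k : ℝ) * (k - 1))⁻¹ ^ t := by
  induction t generalizing a b with
  | zero => simpa using abs_ilhsCDF_sub_ilhsCDF_zero_le h hij m a b
  | succ t ih =>
    rw [Nat.add_right_comm, ilhsCDF_succ h, ilhsCDF_succ h]
    calc _ ≤ ((k : ℝ) * (k - 1))⁻¹ * (k / ((k : ℝ) - 1) ^ 2 * ((k : ℝ) * (k - 1))⁻¹ ^ t) :=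
          abs_cdfStep_sub_cdfStep_le hij
            (fun x y => mem_Ioo_of_ilhsCDF_ne h (two_le_of_ne hij)) ih a b
      _ = _ := by ring

end Sequence

end ILHS

open ILHS in
/-- Kolmogorov–Smirnov bound for ILHS: for nondecreasing `h₁, h₂` on `[0,1]`, the joint
CDFs of `(h₁(U_s⁽¹⁾), h₂(U_s⁽²⁾))` at times `t` and `t + m` differ by at most
`k^{−(t−1)} (k−1)^{−(t+2)}`, uniformly in `(u, v)`. -/
theorem ilhs_ks_distance {Ω : Type*} [MeasurableSpace Ω] (μ : Measure Ω)
    [IsProbabilityMeasure μ] {k : ℕ} (hk : 2 ≤ k)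
    (U0 : Fin k → Ω → ℝ) (σ : ℕ → Ω → Equiv.Perm (Fin k)) (h : IsILHS μ U0 σ)
    (h₁ h₂ : ℝ → ℝ)
    (hm₁ : MonotoneOn h₁ (Set.Icc (0 : ℝ) 1)) (hm₂ : MonotoneOn h₂ (Set.Icc (0 : ℝ) 1)) :
    ∀ (t m : ℕ), 1 ≤ m → ∀ u v : ℝ,
      |(μ {ω | h₁ (ilhs U0 σ (t + m) ⟨0, by omega⟩ ω) ≤ u ∧
               h₂ (ilhs U0 σ (t + m) ⟨1, by omega⟩ ω) ≤ v}).toReal -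
       (μ {ω | h₁ (ilhs U0 σ t ⟨0, by omega⟩ ω) ≤ u ∧
               h₂ (ilhs U0 σ t ⟨1, by omega⟩ ω) ≤ v}).toReal| ≤
      (k : ℝ) ^ (1 - (t : ℤ)) * ((k : ℝ) - 1) ^ (-((t : ℤ) + 2)) := by
  intro t m _ u v
  have hij : (⟨0, by omega⟩ : Fin k) ≠ ⟨1, by omega⟩ := by simp [Fin.ext_iff]
  obtain ⟨c₁, c₂, hc⟩ := exists_measure_monotoneOn_le_eq h hk _ _ hm₁ hm₂ u v
  rw [hc, hc]
  have hk₀ : (k : ℝ) ≠ 0 := by positivity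
  have hk₁ : (k : ℝ) - 1 ≠ 0 := by
    have : (2 : ℝ) ≤ k := by exact_mod_cast hk
    linarith
  calc _ ≤ k / ((k : ℝ) - 1) ^ 2 * ((k : ℝ) * (k - 1))⁻¹ ^ t :=
        abs_ilhsCDF_add_sub_le h hij t m c₁ c₂
    _ = _ := by
        rw [zpow_sub₀ hk₀, zpow_neg, zpow_add₀ hk₁, zpow_one, zpow_natCast, zpow_natCast,
          zpow_ofNat, inv_pow, mul_pow]
        field_simp
end

section
/- Let r_1 be distributed Uniform(0,1) and set r_2 = {r_1 + 1/2}, where {x} denotes the fractional part of x. Then for all s and t with 0 ≤ s < 1/2 and s + 1/2 < t ≤ 1, P(r_1 ≤ t, r_2 ≤ s) = s. Consequently, whenever 0 < s < 1/2 and s + 1/2 < t < 1, P(r_1 ≤ t, r_2 ≤ s) > P(r_1 ≤ t) P(r_2 ≤ s) = t s, so the pair (r_1, r_2) is not negatively quadrant dependent (and hence not negatively associated). -/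
open MeasureTheory

lemma fract_aux {x s : ℝ} (hx0 : 0 < x) (hx1 : x < 1) (hs0 : 0 ≤ s) (hs : s < 1 / 2) :
    Int.fract (x + 1 / 2) ≤ s ↔ (1 / 2 ≤ x ∧ x ≤ s + 1 / 2) := by
  rcases lt_or_ge x (1 / 2) with h | h
  · have : Int.fract (x + 1 / 2) = x + 1 / 2 := by
      rw [Int.fract_eq_self]
      constructor <;> linarith
    rw [this]
    constructor
    · intro hle; linarith
    · rintro ⟨h1, _⟩; linarith
  · have hrw : x + 1 / 2 = (x - 1 / 2) + (1 : ℤ) := by push_cast; ring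
    have : Int.fract (x + 1 / 2) = x - 1 / 2 := by
      rw [hrw, Int.fract_add_intCast, Int.fract_eq_self]
      constructor <;> linarith
    rw [this]
    constructor
    · intro hle; exact ⟨h, by linarith⟩
    · rintro ⟨_, h2⟩; linarith

/-- For `r₁` Uniform(0,1) and `r₂ = {r₁ + 1/2}`: for `0 ≤ s < 1/2` and `s + 1/2 < t ≤ 1`
one has `P(r₁ ≤ t, r₂ ≤ s) = s`; consequently for `0 < s < 1/2` and `s + 1/2 < t < 1`,
`P(r₁ ≤ t) P(r₂ ≤ s) = t s < P(r₁ ≤ t, r₂ ≤ s)`, so `(r₁, r₂)` is not negatively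
quadrant dependent. -/
theorem fract_shift_not_NQD {Ω : Type*} [MeasurableSpace Ω] (μ : Measure Ω)
    [IsProbabilityMeasure μ] (r : Ω → ℝ) (hr : Measurable r)
    (hrlaw : μ.map r = volume.restrict (Set.Ioo (0 : ℝ) 1)) :
    (∀ s t : ℝ, 0 ≤ s → s < 1 / 2 → s + 1 / 2 < t → t ≤ 1 →
      μ {ω | r ω ≤ t ∧ Int.fract (r ω + 1 / 2) ≤ s} = ENNReal.ofReal s) ∧
    (∀ s t : ℝ, 0 < s → s < 1 / 2 → s + 1 / 2 < t → t < 1 →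
      μ {ω | r ω ≤ t} * μ {ω | Int.fract (r ω + 1 / 2) ≤ s} = ENNReal.ofReal (t * s) ∧
      μ {ω | r ω ≤ t} * μ {ω | Int.fract (r ω + 1 / 2) ≤ s} <
        μ {ω | r ω ≤ t ∧ Int.fract (r ω + 1 / 2) ≤ s}) := by
  have key : ∀ S : Set ℝ, MeasurableSet S → μ (r ⁻¹' S) = volume (S ∩ Set.Ioo 0 1) := by
    intro S hS
    rw [← Measure.map_apply hr hS, hrlaw, Measure.restrict_apply hS]
  have mfr : Measurable fun x : ℝ => Int.fract (x + 1 / 2) :=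
    measurable_fract.comp (measurable_id.add_const _)
  have joint : ∀ s t : ℝ, 0 ≤ s → s < 1 / 2 → s + 1 / 2 < t → t ≤ 1 →
      μ {ω | r ω ≤ t ∧ Int.fract (r ω + 1 / 2) ≤ s} = ENNReal.ofReal s := by
    intro s t hs0 hs ht1 ht2
    have hSmeas : MeasurableSet {x : ℝ | x ≤ t ∧ Int.fract (x + 1 / 2) ≤ s} :=
      (measurableSet_Iic).inter (mfr measurableSet_Iic)
    have : μ {ω | r ω ≤ t ∧ Int.fract (r ω + 1 / 2) ≤ s}
        = μ (r ⁻¹' {x : ℝ | x ≤ t ∧ Int.fract (x + 1 / 2) ≤ s}) := rfl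
    rw [this, key _ hSmeas]
    have hseteq : {x : ℝ | x ≤ t ∧ Int.fract (x + 1 / 2) ≤ s} ∩ Set.Ioo 0 1
        = Set.Icc (1 / 2 : ℝ) (s + 1 / 2) := by
      ext x
      simp only [Set.mem_inter_iff, Set.mem_setOf_eq, Set.mem_Ioo, Set.mem_Icc]
      constructor
      · rintro ⟨⟨_, hf⟩, hx0, hx1⟩
        exact (fract_aux hx0 hx1 hs0 hs).mp hf
      · rintro ⟨h1, h2⟩
        have hx0 : 0 < x := by linarith
        have hx1 : x < 1 := by linarith
        exact ⟨⟨by linarith, (fract_aux hx0 hx1 hs0 hs).mpr ⟨h1, h2⟩⟩, hx0, hx1⟩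
    rw [hseteq, Real.volume_Icc]
    congr 1; ring
  refine ⟨joint, fun s t hs0 hs ht1 ht2 => ?_⟩
  have h1 : μ {ω | r ω ≤ t} = ENNReal.ofReal t := by
    have : μ {ω | r ω ≤ t} = μ (r ⁻¹' Set.Iic t) := rfl
    rw [this, key _ measurableSet_Iic]
    have : Set.Iic t ∩ Set.Ioo 0 1 = Set.Ioc (0 : ℝ) t := by
      ext x
      simp only [Set.mem_inter_iff, Set.mem_Iic, Set.mem_Ioo, Set.mem_Ioc]
      constructor
      · rintro ⟨h, h0, _⟩; exact ⟨h0, h⟩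
      · rintro ⟨h0, h⟩; exact ⟨h, h0, by linarith⟩
    rw [this, Real.volume_Ioc, sub_zero]
  have h2 : μ {ω | Int.fract (r ω + 1 / 2) ≤ s} = ENNReal.ofReal s := by
    have : μ {ω | Int.fract (r ω + 1 / 2) ≤ s}
        = μ (r ⁻¹' {x : ℝ | Int.fract (x + 1 / 2) ≤ s}) := rfl
    have hS : MeasurableSet {x : ℝ | Int.fract (x + 1 / 2) ≤ s} := mfr measurableSet_Iic
    rw [this, key _ hS]
    have : {x : ℝ | Int.fract (x + 1 / 2) ≤ s} ∩ Set.Ioo 0 1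
        = Set.Icc (1 / 2 : ℝ) (s + 1 / 2) := by
      ext x
      simp only [Set.mem_inter_iff, Set.mem_setOf_eq, Set.mem_Ioo, Set.mem_Icc]
      constructor
      · rintro ⟨hf, hx0, hx1⟩
        exact (fract_aux hx0 hx1 hs0.le hs).mp hf
      · rintro ⟨ha, hb⟩
        have hx0 : 0 < x := by linarith
        have hx1 : x < 1 := by linarith
        exact ⟨(fract_aux hx0 hx1 hs0.le hs).mpr ⟨ha, hb⟩, hx0, hx1⟩
    rw [this, Real.volume_Icc]
    congr 1; ring
  have ht0 : 0 ≤ t := by linarith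
  constructor
  · rw [h1, h2, ← ENNReal.ofReal_mul ht0]
  · rw [h1, h2, ← ENNReal.ofReal_mul ht0,
      joint s t hs0.le hs ht1 ht2.le]
    exact ENNReal.ofReal_lt_ofReal_iff hs0 |>.mpr (by nlinarith)
end
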